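/- arXiv:1810.04629 — 13 statements merged into one kernel-verified Lean document; each statement's English description precedes it below -/
import Mathlib

section
/- Let G=(V,E) be a finite simple graph and U ⊆ V a set of vertices. The following three conditions are equivalent: (i) G has a minimal vertex cover S with U ⊆ S; (ii) the induced subgraph G[N_G[U]] has a maximal independent set contained in N_G[U]\U; (iii) there exists an independent dominating set S' of G[N_G[U]] with S' ⊆ N_G[U]\U. -/
/-- `S` is a vertex cover of `G`: every edge has an endpoint in `S`. -/
def IsVertexCover {V : Type*} (G : SimpleGraph V) (S : Set V) : Prop :=
  ∀ ⦃u v : V⦄, G.Adj u v → u ∈ S ∨ v ∈ S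

/-- `S` is a minimal vertex cover of `G`: no proper subset is a vertex cover. -/
def IsMinimalVertexCover {V : Type*} (G : SimpleGraph V) (S : Set V) : Prop :=
  IsVertexCover G S ∧ ∀ T : Set V, T ⊂ S → ¬ IsVertexCover G T

/-- `S` is an independent set of `G`: pairwise non-adjacent vertices. -/
def IsIndepSet {V : Type*} (G : SimpleGraph V) (S : Set V) : Prop :=
  ∀ ⦃u v : V⦄, u ∈ S → v ∈ S → ¬ G.Adj u v

/-- `S` is a maximal independent set of `G`: no proper superset is independent. -/
def IsMaximalIndepSet {V : Type*} (G : SimpleGraph V) (S : Set V) : Prop :=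
  IsIndepSet G S ∧ ∀ T : Set V, S ⊂ T → ¬ IsIndepSet G T

/-- `(G, U)` is a yes-instance of Ext VC: some minimal vertex cover contains `U`. -/
def ExtVC {V : Type*} (G : SimpleGraph V) (U : Set V) : Prop :=
  ∃ S : Set V, U ⊆ S ∧ IsMinimalVertexCover G S

/-- `(G, U)` is a yes-instance of Ext IS: some maximal independent set is contained in `U`. -/
def ExtIS {V : Type*} (G : SimpleGraph V) (U : Set V) : Prop :=
  ∃ S : Set V, S ⊆ U ∧ IsMaximalIndepSet G S

/-- The closed neighborhood `N_G[U]` of a set `U` of vertices. -/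
def closedNbhd {V : Type*} (G : SimpleGraph V) (U : Set V) : Set V :=
  U ∪ {v | ∃ u ∈ U, G.Adj u v}

/-- `S` is a dominating set of `G`: every vertex is in `S` or adjacent to a vertex of `S`. -/
def IsDominating {V : Type*} (G : SimpleGraph V) (S : Set V) : Prop :=
  ∀ v : V, v ∈ S ∨ ∃ u ∈ S, G.Adj u v

lemma maximal_iff_dom {V : Type*} (G : SimpleGraph V) (S : Set V) :
    IsMaximalIndepSet G S ↔ IsIndepSet G S ∧ IsDominating G S := by
  constructor
  · rintro ⟨hind, hmax⟩
    refine ⟨hind, fun v => ?_⟩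
    by_cases hv : v ∈ S
    · exact Or.inl hv
    · right
      by_contra h
      push_neg at h
      apply hmax (insert v S) (Set.ssubset_insert hv)
      intro a b ha hb hab
      rcases ha with rfl | ha
      · rcases hb with rfl | hb
        · exact G.irrefl hab
        · exact h b hb hab.symm
      · rcases hb with rfl | hb
        · exact h a ha hab
        · exact hind ha hb hab
  · rintro ⟨hind, hdom⟩
    refine ⟨hind, fun T hT hTind => ?_⟩
    obtain ⟨v, hvT, hvS⟩ := Set.exists_of_ssubset hT
    rcases hdom v with hv | ⟨u, hu, hadj⟩
    · exact hvS hv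
    · exact hTind (hT.subset hu) hvT hadj

lemma exists_maximal_indep_ext {V : Type*} (G : SimpleGraph V) (I₀ : Set V)
    (h : IsIndepSet G I₀) : ∃ I, I₀ ⊆ I ∧ IsMaximalIndepSet G I := by
  obtain ⟨I, hsub, hmax⟩ := zorn_subset_nonempty {T | IsIndepSet G T}
    (fun c hc hchain _ => ⟨⋃₀ c, fun u v hu hv hadj => by
      obtain ⟨s, hs, hus⟩ := hu
      obtain ⟨t, ht, hvt⟩ := hv
      rcases hchain.total hs ht with hst | hts
      · exact hc ht (hst hus) hvt hadj
      · exact hc hs hus (hts hvt) hadj,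
      fun s hs => Set.subset_sUnion_of_mem hs⟩) I₀ h
  refine ⟨I, hsub, hmax.1, fun T hT hTind => hT.not_subset (hmax.2 hTind hT.subset)⟩

lemma vc_iff_compl {V : Type*} (G : SimpleGraph V) (S : Set V) :
    IsVertexCover G S ↔ IsIndepSet G Sᶜ := by
  constructor
  · intro h u v hu hv hadj
    rcases h hadj with h' | h'
    · exact hu h'
    · exact hv h'
  · intro h u v hadj
    by_contra hc
    push_neg at hc
    exact h hc.1 hc.2 hadj

lemma minVC_iff_compl {V : Type*} (G : SimpleGraph V) (S : Set V) :
    IsMinimalVertexCover G S ↔ IsMaximalIndepSet G Sᶜ := by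
  constructor
  · rintro ⟨hvc, hmin⟩
    refine ⟨(vc_iff_compl G S).mp hvc, fun T hT hTind => ?_⟩
    refine hmin Tᶜ ?_ ((vc_iff_compl G Tᶜ).mpr (by simpa using hTind))
    have : Tᶜ ⊂ Sᶜᶜ := compl_lt_compl_iff_lt.mpr hT
    rwa [compl_compl] at this
  · rintro ⟨hind, hmax⟩
    refine ⟨(vc_iff_compl G S).mpr hind, fun T hT hvc => ?_⟩
    have h2 : Sᶜ ⊂ Tᶜ := compl_lt_compl_iff_lt.mpr hT
    exact hmax Tᶜ h2 ((vc_iff_compl G T).mp hvc)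

/-- The three conditions are equivalent: (i) `G` has a minimal vertex cover
containing `U`; (ii) the subgraph induced by `N_G[U]` has a maximal independent set contained
in `N_G[U] \ U`; (iii) the subgraph induced by `N_G[U]` has an independent dominating set
contained in `N_G[U] \ U`. -/
theorem statement_2 {V : Type*} [Fintype V] (G : SimpleGraph V) (U : Set V) :
    (ExtVC G U ↔
      ExtIS (G.induce (closedNbhd G U)) (Subtype.val ⁻¹' (closedNbhd G U \ U))) ∧
    (ExtVC G U ↔
      ∃ S' : Set ↥(closedNbhd G U),
        S' ⊆ Subtype.val ⁻¹' (closedNbhd G U \ U) ∧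
        IsIndepSet (G.induce (closedNbhd G U)) S' ∧
        IsDominating (G.induce (closedNbhd G U)) S') := by
  set N := closedNbhd G U with hN
  set H := G.induce N with hH
  have hHadj : ∀ a b : ↥N, H.Adj a b ↔ G.Adj ↑a ↑b := by
    intro a b; simp [hH, SimpleGraph.induce]
  have key : ExtVC G U ↔
      ∃ S' : Set ↥N, S' ⊆ Subtype.val ⁻¹' (N \ U) ∧
        IsIndepSet H S' ∧ IsDominating H S' := by
    constructor
    · rintro ⟨S, hUS, hmin⟩
      have hSc := (minVC_iff_compl G S).mp hmin
      obtain ⟨hScind, hScdom⟩ := (maximal_iff_dom G Sᶜ).mp hSc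
      -- A : vertices of N not in S
      set A : Set ↥N := Subtype.val ⁻¹' Sᶜ with hA
      have hAind : IsIndepSet H A := by
        intro a b ha hb hadj
        exact hScind ha hb ((hHadj a b).mp hadj)
      obtain ⟨S', hAS', hS'max⟩ := exists_maximal_indep_ext H A hAind
      obtain ⟨hS'ind, hS'dom⟩ := (maximal_iff_dom H S').mp hS'max
      refine ⟨S', fun x hx => ⟨x.2, fun hxU => ?_⟩, hS'ind, hS'dom⟩
      -- x ∈ S' with ↑x ∈ U leads to contradiction
      have hxS : (x : V) ∈ S := hUS hxU
      rcases hScdom (x : V) with h | ⟨t, htSc, hadj⟩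
      · exact h hxS
      · have htN : t ∈ N := Or.inr ⟨(x : V), hxU, hadj.symm⟩
        have htA : (⟨t, htN⟩ : ↥N) ∈ A := htSc
        exact hS'ind (hAS' htA) hx ((hHadj _ _).mpr hadj)
    · rintro ⟨S', hS'P, hind, hdom⟩
      have hI₀ : IsIndepSet G (Subtype.val '' S') := by
        rintro _ _ ⟨a, ha, rfl⟩ ⟨b, hb, rfl⟩ hadj
        exact hind ha hb ((hHadj a b).mpr hadj)
      obtain ⟨I, hsub, hImax⟩ := exists_maximal_indep_ext G _ hI₀
      refine ⟨Iᶜ, fun u hu => ?_, (minVC_iff_compl G Iᶜ).mpr (by rwa [compl_compl])⟩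
      -- U ⊆ Iᶜ
      have huN : u ∈ N := Or.inl hu
      intro huI
      rcases hdom ⟨u, huN⟩ with h | ⟨a, haS', hadj⟩
      · exact (hS'P h).2 hu
      · have : (a : V) ∈ I := hsub ⟨a, haS', rfl⟩
        exact hImax.1 this huI ((hHadj _ _).mp hadj)
  refine ⟨?_, key⟩
  rw [key]
  constructor
  · rintro ⟨S', h1, h2, h3⟩
    exact ⟨S', h1, (maximal_iff_dom H S').mpr ⟨h2, h3⟩⟩
  · rintro ⟨S', h1, hmax⟩
    obtain ⟨h2, h3⟩ := (maximal_iff_dom H S').mp hmax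
    exact ⟨S', h1, h2, h3⟩
end

section
/- Let G=(V,E) be a finite simple graph, U ⊆ V, and let u, u' be two distinct vertices of U with uu' ∈ E. Let G' be the graph obtained from G by deleting the edge uu'. Then (G,U) is a yes-instance of Ext VC if and only if (G',U) is a yes-instance of Ext VC. -/
/-- Minimal vertex cover characterization via private neighbors. -/
lemma minvc_iff {V : Type*} (G : SimpleGraph V) (S : Set V) :
    IsMinimalVertexCover G S ↔
      IsVertexCover G S ∧ ∀ v ∈ S, ∃ w, w ∉ S ∧ G.Adj v w := by
  constructor
  · rintro ⟨hvc, hmin⟩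
    refine ⟨hvc, fun v hv => ?_⟩
    by_contra h
    push_neg at h
    apply hmin (S \ {v}) ⟨Set.diff_subset, fun hsub => (hsub hv).2 rfl⟩
    intro a b hab
    rcases hvc hab with ha | hb
    · rcases eq_or_ne a v with rfl | hne
      · have hb' : b ∈ S := by
          by_contra hb'
          exact h b hb' hab
        exact Or.inr ⟨hb', fun hbv => G.irrefl (hbv ▸ hab)⟩
      · exact Or.inl ⟨ha, hne⟩
    · rcases eq_or_ne b v with rfl | hne
      · have ha' : a ∈ S := by
          by_contra ha'
          exact h a ha' hab.symm
        exact Or.inl ⟨ha', fun hav => G.irrefl (hav ▸ hab)⟩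
      · exact Or.inr ⟨hb, hne⟩
  · rintro ⟨hvc, hpriv⟩
    refine ⟨hvc, fun T hT hTvc => ?_⟩
    obtain ⟨v, hvS, hvT⟩ := Set.exists_of_ssubset hT
    obtain ⟨w, hwS, hvw⟩ := hpriv v hvS
    rcases hTvc hvw with h | h
    · exact hvT h
    · exact hwS (hT.subset h)

/-- Deleting an edge between two vertices of `U` does not change the answer
of Ext VC. -/
theorem statement_3 {V : Type*} [Fintype V] (G : SimpleGraph V) (U : Set V) (u u' : V)
    (hu : u ∈ U) (hu' : u' ∈ U) (hne : u ≠ u') (hadj : G.Adj u u') :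
    ExtVC G U ↔ ExtVC (G.deleteEdges {s(u, u')}) U := by
  have hdel : ∀ a b : V, (G.deleteEdges {s(u, u')}).Adj a b ↔
      G.Adj a b ∧ ¬(a = u ∧ b = u' ∨ a = u' ∧ b = u) := by
    intro a b
    rw [SimpleGraph.deleteEdges_adj, Set.mem_singleton_iff, Sym2.eq_iff]
  constructor
  · rintro ⟨S, hUS, hmin⟩
    rw [minvc_iff] at hmin
    obtain ⟨hvc, hpriv⟩ := hmin
    refine ⟨S, hUS, (minvc_iff _ _).mpr ⟨fun a b hab => hvc ((hdel a b).mp hab).1, fun v hv => ?_⟩⟩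
    obtain ⟨w, hwS, hvw⟩ := hpriv v hv
    refine ⟨w, hwS, (hdel v w).mpr ⟨hvw, ?_⟩⟩
    rintro (⟨rfl, rfl⟩ | ⟨rfl, rfl⟩)
    · exact hwS (hUS hu')
    · exact hwS (hUS hu)
  · rintro ⟨S, hUS, hmin⟩
    rw [minvc_iff] at hmin
    obtain ⟨hvc, hpriv⟩ := hmin
    refine ⟨S, hUS, (minvc_iff _ _).mpr ⟨fun a b hab => ?_, fun v hv => ?_⟩⟩
    · by_cases h : a = u ∧ b = u' ∨ a = u' ∧ b = u
      · rcases h with ⟨rfl, rfl⟩ | ⟨rfl, rfl⟩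
        · exact Or.inl (hUS hu)
        · exact Or.inl (hUS hu')
      · exact hvc ((hdel a b).mpr ⟨hab, h⟩)
    · obtain ⟨w, hwS, hvw⟩ := hpriv v hv
      exact ⟨w, hwS, ((hdel v w).mp hvw).1⟩
end

section
/- Let G=(V,E) be a finite simple graph and U ⊆ V. Then (G,U) is a yes-instance of Ext VC if and only if (G[N_G[U]], U) is a yes-instance of Ext VC, i.e., deleting all vertices outside the closed neighborhood of U does not change the answer. -/
lemma private_nbr {V : Type*} {G : SimpleGraph V} {S : Set V}
    (h : IsMinimalVertexCover G S) {v : V} (hv : v ∈ S) :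
    ∃ w, G.Adj v w ∧ w ∉ S := by
  by_contra hc
  push_neg at hc
  apply h.2 (S \ {v}) (Set.sdiff_singleton_ssubset.mpr hv)
  intro a b hab
  rcases h.1 hab with ha | hb
  · by_cases h' : a = v
    · subst h'
      exact Or.inr ⟨hc b hab, fun hb' => hab.ne' (by simpa using hb')⟩
    · exact Or.inl ⟨ha, h'⟩
  · by_cases h' : b = v
    · subst h'
      exact Or.inl ⟨hc a hab.symm, fun ha' => hab.ne (by simpa using ha')⟩
    · exact Or.inr ⟨hb, h'⟩

lemma exists_min_sub {V : Type*} [Fintype V] (G : SimpleGraph V) {C : Set V}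
    (hC : IsVertexCover G C) : ∃ S ⊆ C, IsMinimalVertexCover G S := by
  have wf : WellFounded ((· < ·) : Set V → Set V → Prop) := wellFounded_lt
  obtain ⟨S, ⟨hSC, hSvc⟩, hmin⟩ := wf.has_min {S | S ⊆ C ∧ IsVertexCover G S}
    ⟨C, subset_rfl, hC⟩
  exact ⟨S, hSC, hSvc, fun T hT hTvc => hmin T ⟨hT.1.trans hSC, hTvc⟩ hT⟩


theorem statement_4 {V : Type*} [Fintype V] (G : SimpleGraph V) (U : Set V) :
    ExtVC G U ↔ ExtVC (G.induce (closedNbhd G U)) (Subtype.val ⁻¹' U) := by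
  set N := closedNbhd G U with hN
  constructor
  · rintro ⟨S, hUS, hS⟩
    have hC : IsVertexCover (G.induce N) {x : N | x.val ∈ S} := by
      intro a b hab
      exact hS.1 hab
    haveI : Fintype ↑N := Fintype.ofFinite _
    obtain ⟨S', hS'C, hS'⟩ := exists_min_sub (G.induce N) hC
    refine ⟨S', ?_, hS'⟩
    intro x hx
    obtain ⟨w, hadj, hwS⟩ := private_nbr hS (hUS hx)
    have hwN : w ∈ N := Or.inr ⟨x.val, hx, hadj⟩
    have hedge : (G.induce N).Adj x ⟨w, hwN⟩ := hadj
    rcases hS'.1 hedge with h | h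
    · exact h
    · exact absurd (hS'C h) hwS
  · rintro ⟨T, hUT, hT⟩
    have hC : IsVertexCover G (Subtype.val '' T ∪ Nᶜ) := by
      intro a b hab
      by_cases ha : a ∈ N
      · by_cases hb : b ∈ N
        · have hedge : (G.induce N).Adj ⟨a, ha⟩ ⟨b, hb⟩ := hab
          rcases hT.1 hedge with h | h
          · exact Or.inl (Or.inl ⟨⟨a, ha⟩, h, rfl⟩)
          · exact Or.inr (Or.inl ⟨⟨b, hb⟩, h, rfl⟩)
        · exact Or.inr (Or.inr hb)
      · exact Or.inl (Or.inr ha)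
    obtain ⟨S, hSC, hS⟩ := exists_min_sub G hC
    refine ⟨S, ?_, hS⟩
    intro u hu
    have huN : u ∈ N := Or.inl hu
    have hxT : (⟨u, huN⟩ : N) ∈ T := hUT hu
    obtain ⟨y, hadj, hyT⟩ := private_nbr hT hxT
    have hyC : y.val ∉ Subtype.val '' T ∪ Nᶜ := by
      rintro (⟨z, hz, hzy⟩ | h)
      · exact hyT (Subtype.ext hzy ▸ hz)
      · exact h y.2
    have hadjG : G.Adj u y.val := hadj
    rcases hS.1 hadjG with h | h
    · exact h
    · exact absurd (hSC h) hyC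
end

section
/- Let G=(V,E) be a finite simple graph, U ⊆ V, and let u ∈ U be a vertex of degree one in G whose unique neighbor x does not belong to U. Then (G,U) is a yes-instance of Ext VC if and only if (G − N_G[x], U \ N_G[x]) is a yes-instance of Ext VC, where G − N_G[x] is the subgraph induced by V \ N_G[x]. -/
/-- If `u ∈ U` has degree one, with unique neighbor `x ∉ U`, then
`(G, U)` is a yes-instance of Ext VC iff `(G − N_G[x], U \ N_G[x])` is. -/
theorem statement_5 {V : Type*} [Fintype V] (G : SimpleGraph V) (U : Set V) (u x : V)
    (hu : u ∈ U) (hdeg : G.neighborSet u = {x}) (hx : x ∉ U) :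
    ExtVC G U ↔
      ExtVC (G.induce (insert x (G.neighborSet x))ᶜ)
        (Subtype.val ⁻¹' (U \ insert x (G.neighborSet x))) := by
  set A : Set V := insert x (G.neighborSet x) with hA
  have hux : G.Adj u x := by
    have : x ∈ G.neighborSet u := by rw [hdeg]; rfl
    exact this
  constructor
  · rintro ⟨S, hUS, hSvc, hSmin⟩
    have huS : u ∈ S := hUS hu
    -- x ∉ S
    have hxS : x ∉ S := by
      intro hxS
      refine hSmin (S \ {u}) ⟨Set.diff_subset, ?_⟩ ?_
      · intro hsub
        exact (hsub huS).2 rfl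
      · intro a b hab
        rcases hSvc hab with h | h
        · by_cases ha : a = u
          · subst ha
            have : b ∈ G.neighborSet a := hab
            rw [hdeg] at this
            right; exact ⟨this ▸ hxS, by rintro rfl; exact G.irrefl (this ▸ hab)⟩
          · exact Or.inl ⟨h, ha⟩
        · by_cases hb : b = u
          · subst hb
            have : a ∈ G.neighborSet b := hab.symm
            rw [hdeg] at this
            left; exact ⟨this ▸ hxS, by rintro rfl; exact G.irrefl (this ▸ hab.symm)⟩
          · exact Or.inr ⟨h, hb⟩
    have hNx : ∀ v, G.Adj x v → v ∈ S := fun v hv =>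
      (hSvc hv).resolve_left hxS
    refine ⟨Subtype.val ⁻¹' S, ?_, ?_, ?_⟩
    · intro a ha; exact hUS ha.1
    · intro a b hab
      exact hSvc hab
    · intro T' hT' hT'vc
      set T : Set V := Subtype.val '' T' ∪ G.neighborSet x with hT
      refine hSmin T ⟨?_, ?_⟩ ?_
      · rintro a (⟨b, hb, rfl⟩ | ha)
        · exact hT'.1 hb
        · exact hNx _ ha
      · intro hsub
        obtain ⟨a, haS, haT'⟩ := Set.exists_of_ssubset hT'
        have : a.val ∈ T := hsub haS
        rcases this with ⟨b, hb, hba⟩ | ha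
        · exact haT' (Subtype.coe_injective hba ▸ hb)
        · exact a.2 (Set.mem_insert_iff.mpr (Or.inr ha))
      · intro a b hab
        by_cases ha : a ∈ A
        · rcases ha with rfl | ha
          · right; exact Or.inr hab
          · left; exact Or.inr ha
        by_cases hb : b ∈ A
        · rcases hb with rfl | hb
          · left; exact Or.inr hab.symm
          · right; exact Or.inr hb
        rcases hT'vc (show (G.induce Aᶜ).Adj ⟨a, ha⟩ ⟨b, hb⟩ from hab) with h | h
        · exact Or.inl (Or.inl ⟨_, h, rfl⟩)
        · exact Or.inr (Or.inl ⟨_, h, rfl⟩)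
  · rintro ⟨S', hUS', hS'vc, hS'min⟩
    set S : Set V := Subtype.val '' S' ∪ G.neighborSet x with hS
    have hxS : x ∉ S := by
      rintro (⟨b, _, hb⟩ | h)
      · exact b.2 (hb ▸ Set.mem_insert x _)
      · exact G.irrefl h
    refine ⟨S, ?_, ?_, ?_⟩
    · intro v hv
      by_cases hvA : v ∈ A
      · rcases hvA with rfl | hvA
        · exact absurd hv hx
        · exact Or.inr hvA
      · exact Or.inl ⟨⟨v, hvA⟩, hUS' ⟨hv, hvA⟩, rfl⟩
    · intro a b hab
      by_cases ha : a ∈ A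
      · rcases ha with rfl | ha
        · right; exact Or.inr hab
        · left; exact Or.inr ha
      by_cases hb : b ∈ A
      · rcases hb with rfl | hb
        · left; exact Or.inr hab.symm
        · right; exact Or.inr hb
      rcases hS'vc (show (G.induce Aᶜ).Adj ⟨a, ha⟩ ⟨b, hb⟩ from hab) with h | h
      · exact Or.inl (Or.inl ⟨_, h, rfl⟩)
      · exact Or.inr (Or.inl ⟨_, h, rfl⟩)
    · intro T hTS hTvc
      by_cases hNxT : G.neighborSet x ⊆ T
      · set T' : Set ↥Aᶜ := Subtype.val ⁻¹' T with hT'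
        refine hS'min T' ⟨?_, ?_⟩ ?_
        · intro a ha
          rcases hTS.1 ha with ⟨b, hb, hba⟩ | h
          · exact Subtype.coe_injective hba ▸ hb
          · exact absurd (Set.mem_insert_iff.mpr (Or.inr h)) a.2
        · intro hsub
          obtain ⟨s, hsS, hsT⟩ := Set.exists_of_ssubset hTS
          rcases hsS with ⟨b, hb, rfl⟩ | h
          · exact hsT (hsub hb)
          · exact hsT (hNxT h)
        · intro a b hab
          exact hTvc (show G.Adj a.val b.val from hab)
      · obtain ⟨v, hv, hvT⟩ := Set.not_subset.mp hNxT
        rcases hTvc (show G.Adj x v from hv) with h | h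
        · exact hxS (hTS.1 h)
        · exact hvT h
end

section
/- Let G=(V,E) be a finite simple graph, U ⊆ V, and let u ∈ U have a neighbor x ∉ U of degree one in G. Then (G,U) is a yes-instance of Ext VC if and only if (G − {u,x}, U \ {u}) is a yes-instance of Ext VC, where G − {u,x} is the subgraph induced by V \ {u,x}. -/
/-- If `u ∈ U` has a neighbor `x ∉ U` of degree one, then
`(G, U)` is a yes-instance of Ext VC iff `(G − {u, x}, U \ {u})` is. -/
theorem statement_6 {V : Type*} [Fintype V] (G : SimpleGraph V) (U : Set V) (u x : V)
    (hu : u ∈ U) (hx : x ∉ U) (hadj : G.Adj u x) (hdeg : G.neighborSet x = {u}) :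
    ExtVC G U ↔
      ExtVC (G.induce ({u, x} : Set V)ᶜ) (Subtype.val ⁻¹' (U \ {u})) := by
  have hux : u ≠ x := hadj.ne
  have hxn : ∀ w, G.Adj x w → w = u := by
    intro w h
    have hw : w ∈ G.neighborSet x := h
    rw [hdeg] at hw
    exact hw
  constructor
  · rintro ⟨S, hUS, hScov, hSmin⟩
    have huS : u ∈ S := hUS hu
    have hxS : x ∉ S := by
      intro hxS
      refine hSmin (S \ {x}) ⟨Set.diff_subset, fun hsub => (hsub hxS).2 rfl⟩ ?_
      intro a b hab
      rcases hScov hab with h | h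
      · by_cases ha : a = x
        · subst ha
          right
          have hb : b = u := hxn b hab
          subst hb
          exact ⟨huS, fun he => hux he⟩
        · exact Or.inl ⟨h, ha⟩
      · by_cases hb : b = x
        · subst hb
          left
          have ha : a = u := hxn a hab.symm
          subst ha
          exact ⟨huS, fun he => hux he⟩
        · exact Or.inr ⟨h, hb⟩
    refine ⟨{v | v.val ∈ S}, ?_, ?_, ?_⟩
    · intro v hv
      exact hUS hv.1
    · intro a b hab
      exact hScov hab
    · rintro T ⟨hTsub, hTne⟩ hTcov
      apply hSmin (Subtype.val '' T ∪ {u})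
      · constructor
        · rintro a (⟨b, hb, rfl⟩ | rfl)
          · exact hTsub hb
          · exact huS
        · intro hsub
          apply hTne
          intro v hv
          rcases hsub hv with (⟨w, hw, hwe⟩ | he)
          · have hwv : w = v := Subtype.ext hwe
            exact hwv ▸ hw
          · exact absurd (Or.inl he) v.2
      · intro a b hab
        by_cases ha : a = u
        · exact Or.inl (Or.inr ha)
        · by_cases hb : b = u
          · exact Or.inr (Or.inr hb)
          · by_cases hax : a = x
            · exact absurd (hxn b (hax ▸ hab)) hb
            · by_cases hbx : b = x
              · exact absurd (hxn a (hbx ▸ hab.symm)) ha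
              · have hamem : a ∈ ({u, x} : Set V)ᶜ := by
                  simp [ha, hax]
                have hbmem : b ∈ ({u, x} : Set V)ᶜ := by
                  simp [hb, hbx]
                have : (G.induce ({u, x} : Set V)ᶜ).Adj ⟨a, hamem⟩ ⟨b, hbmem⟩ := hab
                rcases hTcov this with h | h
                · exact Or.inl (Or.inl ⟨⟨a, hamem⟩, h, rfl⟩)
                · exact Or.inr (Or.inl ⟨⟨b, hbmem⟩, h, rfl⟩)
  · rintro ⟨S', hUS', hcov', hmin'⟩
    have hcovG : IsVertexCover G (Subtype.val '' S' ∪ {u}) := by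
      intro a b hab
      by_cases ha : a = u
      · exact Or.inl (Or.inr ha)
      · by_cases hb : b = u
        · exact Or.inr (Or.inr hb)
        · by_cases hax : a = x
          · exact absurd (hxn b (hax ▸ hab)) hb
          · by_cases hbx : b = x
            · exact absurd (hxn a (hbx ▸ hab.symm)) ha
            · have hamem : a ∈ ({u, x} : Set V)ᶜ := by simp [ha, hax]
              have hbmem : b ∈ ({u, x} : Set V)ᶜ := by simp [hb, hbx]
              have : (G.induce ({u, x} : Set V)ᶜ).Adj ⟨a, hamem⟩ ⟨b, hbmem⟩ := hab
              rcases hcov' this with h | h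
              · exact Or.inl (Or.inl ⟨⟨a, hamem⟩, h, rfl⟩)
              · exact Or.inr (Or.inl ⟨⟨b, hbmem⟩, h, rfl⟩)
    refine ⟨Subtype.val '' S' ∪ {u}, ?_, hcovG, ?_⟩
    · intro v hv
      by_cases hvu : v = u
      · exact Or.inr hvu
      · have hvx : v ≠ x := fun h => hx (h ▸ hv)
        have hvmem : v ∈ ({u, x} : Set V)ᶜ := by simp [hvu, hvx]
        exact Or.inl ⟨⟨v, hvmem⟩, hUS' ⟨hv, hvu⟩, rfl⟩
    · rintro T ⟨hTsub, hTne⟩ hTcov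
      have hxnot : x ∉ Subtype.val '' S' ∪ {u} := by
        rintro (⟨w, hw, hwe⟩ | he)
        · exact absurd (Or.inr hwe) w.2
        · exact hux he.symm
      have hxT : x ∉ T := fun h => hxnot (hTsub h)
      have huT : u ∈ T := by
        rcases hTcov hadj with h | h
        · exact h
        · exact absurd h hxT
      -- build T' ⊂ S'
      have hT'sub : {v : ↥(({u, x} : Set V)ᶜ) | v.val ∈ T} ⊆ S' := by
        intro v hv
        rcases hTsub hv with (⟨w, hw, hwe⟩ | he)
        · have hwv : w = v := Subtype.ext hwe
          exact hwv ▸ hw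
        · exact absurd (Or.inl he) v.2
      apply hmin' {v : ↥(({u, x} : Set V)ᶜ) | v.val ∈ T}
      · refine ⟨hT'sub, ?_⟩
        intro hsub
        apply hTne
        rintro a (⟨w, hw, rfl⟩ | rfl)
        · exact hsub hw
        · exact huT
      · intro a b hab
        rcases hTcov (hab : G.Adj a.val b.val) with h | h
        · exact Or.inl h
        · exact Or.inr h
end

section
/- Let G=(V,E) be a finite simple graph, U ⊆ V an independent set of G, and let x ∉ U be a vertex with nonempty neighborhood satisfying N_G(x) ⊆ U. Then (G,U) is a yes-instance of Ext VC if and only if (G − N_G[x], U \ N_G[x]) is a yes-instance of Ext VC, where G − N_G[x] is the subgraph induced by V \ N_G[x]. -/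
lemma minVC_iff {V : Type*} (G : SimpleGraph V) (S : Set V) :
    IsMinimalVertexCover G S ↔ IsVertexCover G S ∧ ∀ v ∈ S, ∃ u, G.Adj v u ∧ u ∉ S := by
  constructor
  · rintro ⟨hvc, hmin⟩
    refine ⟨hvc, fun v hv => ?_⟩
    by_contra h
    push_neg at h
    apply hmin (S \ {v}) (Set.sdiff_singleton_ssubset.mpr hv)
    intro a b hab
    rcases hvc hab with ha | hb
    · by_cases hav : a = v
      · subst hav
        exact Or.inr ⟨h b hab, fun hbv => by subst hbv; exact G.irrefl hab⟩
      · exact Or.inl ⟨ha, hav⟩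
    · by_cases hbv : b = v
      · subst hbv
        exact Or.inl ⟨h a hab.symm, fun hav => by subst hav; exact G.irrefl hab⟩
      · exact Or.inr ⟨hb, hbv⟩
  · rintro ⟨hvc, hpriv⟩
    refine ⟨hvc, fun T hT hTvc => ?_⟩
    obtain ⟨v, hvS, hvT⟩ := Set.exists_of_ssubset hT
    obtain ⟨u, hadj, huS⟩ := hpriv v hvS
    rcases hTvc hadj with h | h
    · exact hvT h
    · exact huS (hT.subset h)

/-- If `U` is independent and `x ∉ U` has nonempty neighborhood contained in `U`,
then `(G, U)` is a yes-instance of Ext VC iff `(G − N_G[x], U \ N_G[x])` is. -/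
theorem statement_7 {V : Type*} [Fintype V] (G : SimpleGraph V) (U : Set V) (x : V)
    (hU : IsIndepSet G U) (hx : x ∉ U) (hne : (G.neighborSet x).Nonempty)
    (hsub : G.neighborSet x ⊆ U) :
    ExtVC G U ↔
      ExtVC (G.induce (insert x (G.neighborSet x))ᶜ)
        (Subtype.val ⁻¹' (U \ insert x (G.neighborSet x))) := by
  set N : Set V := insert x (G.neighborSet x) with hN
  constructor
  · rintro ⟨S, hUS, hS⟩
    rw [minVC_iff] at hS
    obtain ⟨hvc, hpriv⟩ := hS
    have hNS : G.neighborSet x ⊆ S := fun v hv => hUS (hsub hv)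
    have hxS : x ∉ S := by
      intro hxS
      obtain ⟨u, hadj, huS⟩ := hpriv x hxS
      exact huS (hNS hadj)
    refine ⟨Subtype.val ⁻¹' S, fun v hv => hUS hv.1, ?_⟩
    rw [minVC_iff]
    constructor
    · intro a b hab
      exact hvc hab
    · rintro ⟨v, hvN⟩ hvS
      obtain ⟨u, hadj, huS⟩ := hpriv v hvS
      have huN : u ∈ Nᶜ := by
        intro huN
        rcases huN with rfl | huNx
        · exact hvN (Or.inr hadj.symm)
        · exact huS (hNS huNx)
      exact ⟨⟨u, huN⟩, hadj, huS⟩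
  · rintro ⟨S', hUS', hS'⟩
    rw [minVC_iff] at hS'
    obtain ⟨hvc', hpriv'⟩ := hS'
    have hxN : x ∈ N := Or.inl rfl
    refine ⟨Subtype.val '' S' ∪ G.neighborSet x, ?_, ?_⟩
    · intro u hu
      by_cases huNx : u ∈ G.neighborSet x
      · exact Or.inr huNx
      · have huN : u ∈ Nᶜ := by
          rintro (rfl | h)
          · exact hx hu
          · exact huNx h
        exact Or.inl ⟨⟨u, huN⟩, hUS' ⟨hu, huN⟩, rfl⟩
    · rw [minVC_iff]
      constructor
      · intro a b hab
        by_cases haN : a ∈ N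
        · rcases haN with rfl | h
          · exact Or.inr (Or.inr hab)
          · exact Or.inl (Or.inr h)
        · by_cases hbN : b ∈ N
          · rcases hbN with rfl | h
            · exact Or.inl (Or.inr hab.symm)
            · exact Or.inr (Or.inr h)
          · rcases hvc' (show (G.induce Nᶜ).Adj ⟨a, haN⟩ ⟨b, hbN⟩ from hab) with h | h
            · exact Or.inl (Or.inl ⟨⟨a, haN⟩, h, rfl⟩)
            · exact Or.inr (Or.inl ⟨⟨b, hbN⟩, h, rfl⟩)
      · rintro v (⟨⟨w, hwN⟩, hwS, rfl⟩ | hvNx)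
        · obtain ⟨⟨u, huN⟩, hadj, huS⟩ := hpriv' _ hwS
          refine ⟨u, hadj, ?_⟩
          rintro (⟨u', hu'S, hu'e⟩ | huNx)
          · exact huS (by rwa [show u' = ⟨u, huN⟩ from Subtype.ext hu'e] at hu'S)
          · exact huN (Or.inr huNx)
        · refine ⟨x, hvNx.symm, ?_⟩
          rintro (⟨u', _, hu'e⟩ | hxNx)
          · exact u'.2 (hu'e ▸ hxN)
          · exact G.irrefl hxNx
end

section
/- Let T=(V,E) be a finite tree and U ⊆ V an independent set. Then (T,U) is a yes-instance of Ext VC if and only if there is no subtree T'=(V',E') of T that is induced edge full with respect to (T,U) such that the black-and-white tree T'[(U∩V')→black] belongs to the class 𝒯. -/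
/-- Membership in the inductively defined class `𝒯` of black-and-white trees, realized as
(induced sub)graphs of an ambient graph `G`: `BWTree G V' B` means that the subgraph of `G`
induced by the vertex set `V'`, with exactly the vertices of `B` colored black, belongs to `𝒯`.
Base case: a single black vertex. Step: add a new path `a − b − c` (three new vertices, with
`c` black and `a`, `b` white) and join `a` by an edge to a black vertex `x` of the old tree;
no other adjacencies between the new vertices and the old ones are allowed (so that the
induced subgraph on the enlarged vertex set is exactly the enlarged tree). -/
inductive BWTree {V : Type*} (G : SimpleGraph V) : Set V → Set V → Prop
  | base (x : V) : BWTree G {x} {x}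
  | step (V' B : Set V) (x a b c : V) :
      BWTree G V' B → x ∈ B →
      a ∉ V' → b ∉ V' → c ∉ V' → a ≠ b → a ≠ c → b ≠ c →
      G.Adj x a → G.Adj a b → G.Adj b c → ¬ G.Adj a c →
      (∀ y ∈ V', ∀ z : V, (z = a ∨ z = b ∨ z = c) → G.Adj y z → y = x ∧ z = a) →
      BWTree G (V' ∪ {a, b, c}) (B ∪ {c})

/-!
An Ext VC solution `S ⊇ U` is the complement of an independent set `D` avoiding `U` that contains a
neighbour of every `u ∈ U`. Such a `D` cannot live on a `𝒯`-tree whose black vertices keep all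
their edges: the newest black leaf `c` of a path `x − a − b − c` must use `b`, so `x` cannot use
`a`, and peeling off paths ends at a lone black vertex.

Conversely, call `u ∈ U` forced towards `b` if a `𝒯`-tree saturating the other edges of `u` hangs
from `u` away from `b`; a neighbour `a` of `u` is blocked if `a − b' − v` with `v` forced towards
`b'`. Blocked neighbours can be absorbed into the tree hanging from `u`, so a vertex all of whose
neighbours are blocked, or whose forced neighbour is blocked, yields an obstruction. Otherwise
rooting `T` and letting every `u` take its forced neighbour, or else an unblocked child, gives `D`.
-/

namespace SimpleGraph

variable {V : Type*} {T : SimpleGraph V}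

lemma Connected.exists_adj_dist_add_one (hT : T.Connected) {u v : V} (hne : u ≠ v) :
    ∃ w, T.Adj u w ∧ T.dist v w + 1 = T.dist v u := by
  obtain ⟨p, -, hp⟩ := hT.exists_path_of_dist u v
  cases p with
  | nil => exact absurd rfl hne
  | @cons _ w _ h q =>
    refine ⟨w, h, ?_⟩
    have := T.dist_le q
    have := hT.dist_triangle (u := u) (v := w) (w := v)
    rw [dist_eq_one_iff_adj.mpr h, Walk.length_cons] at *
    rw [dist_comm (u := v), dist_comm (u := v)]
    omega

lemma IsTree.not_adj_of_adj_of_adj (hT : T.IsTree) {a b c : V} (hab : T.Adj a b)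
    (hbc : T.Adj b c) : ¬ T.Adj a c := by
  classical
  exact fun hac => hT.isAcyclic.cliqueFree le_rfl {a, b, c}
    (is3Clique_triple_iff.mpr ⟨hab, hac, hbc⟩)

lemma IsTree.eq_of_adj_of_dist_add_one (hT : T.IsTree) (r : V) {u y y' : V} (hy : T.Adj u y)
    (hy' : T.Adj u y') (h : T.dist r y + 1 = T.dist r u) (h' : T.dist r y' + 1 = T.dist r u) :
    y = y' := by
  classical
  obtain ⟨p, hp, -⟩ := hT.connected.exists_path_of_dist r u
  have hpen : ∀ y, T.Adj u y → T.dist r y + 1 = T.dist r u → y = p.penultimate := by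
    intro y hy h
    obtain ⟨q, hq, hqlen⟩ := hT.connected.exists_path_of_dist r y
    have hu : u ∉ q.support := fun hu => by
      have := T.dist_le (q.takeUntil u hu)
      have := q.length_takeUntil_le_length hu
      omega
    exact hT.isAcyclic.eq_penultimate_of_adj_end hp hy
      (hT.isAcyclic.mem_support_of_ne_mem_support_of_adj_of_isPath hp hq hy hu)
  exact (hpen y hy h).trans (hpen y' hy' h').symm

/-- For an edge `xy` of a tree, the component of `y` in `T - xy`. -/
def branch (T : SimpleGraph V) (x y : V) : Set V := {w | T.dist w y < T.dist w x}

lemma mem_branch_right {x y : V} (h : T.Adj x y) : y ∈ T.branch x y := by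
  simp [branch, dist_eq_one_iff_adj.mpr h.symm]

lemma left_notMem_branch {x y : V} : x ∉ T.branch x y := by
  simp [branch]

lemma IsTree.mem_branch_iff (hT : T.IsTree) {x y w : V} (h : T.Adj x y) :
    w ∈ T.branch x y ↔ T.dist w y + 1 = T.dist w x := by
  have := hT.dist_eq_dist_add_one_of_adj w h
  simp only [branch, Set.mem_ofPred_eq]
  omega

lemma IsTree.disjoint_branch (hT : T.IsTree) {u y y' : V} (hy : T.Adj u y) (hy' : T.Adj u y')
    (hne : y ≠ y') : Disjoint (T.branch u y) (T.branch u y') := by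
  refine Set.disjoint_left.mpr fun w hw hw' => hne ?_
  rw [hT.mem_branch_iff hy] at hw
  rw [hT.mem_branch_iff hy'] at hw'
  exact hT.eq_of_adj_of_dist_add_one w hy hy' hw hw'

lemma IsTree.branch_subset_branch (hT : T.IsTree) {x y z : V} (hxy : T.Adj x y)
    (hyz : T.Adj y z) (hxz : x ≠ z) : T.branch y z ⊆ T.branch x y := by
  intro w hw
  rw [hT.mem_branch_iff hyz] at hw
  rw [hT.mem_branch_iff hxy]
  rcases hT.dist_eq_dist_add_one_of_adj w hxy with h | h
  · exact h.symm
  · exact absurd (hT.eq_of_adj_of_dist_add_one w hxy.symm hyz h.symm hw) hxz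

lemma IsTree.insert_subset_branch (hT : T.IsTree) {x a b c : V} (hxa : T.Adj x a)
    (hab : T.Adj a b) (hbc : T.Adj b c) (hxb : x ≠ b) (hac : a ≠ c) :
    {a, b, c} ⊆ T.branch x a := by
  have hb := hT.branch_subset_branch hxa hab hxb
  rintro z (rfl | rfl | rfl)
  · exact mem_branch_right hxa
  · exact hb (mem_branch_right hab)
  · exact hb (hT.branch_subset_branch hab hbc hac (mem_branch_right hbc))

lemma IsTree.disjoint_branch_of_path (hT : T.IsTree) {a b v a' : V} (hab : T.Adj a b)
    (hbv : T.Adj b v) (hva' : T.Adj v a') (hav : a ≠ v) (hba' : b ≠ a') :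
    Disjoint {a, b, v} (T.branch v a') := by
  have hdisj := Set.disjoint_left.mp (hT.disjoint_branch hbv.symm hva' hba')
  rw [Set.disjoint_left]
  rintro z (rfl | rfl | rfl)
  · exact hdisj (hT.branch_subset_branch hbv.symm hab.symm hav.symm (mem_branch_right hab.symm))
  · exact hdisj (mem_branch_right hbv.symm)
  · exact left_notMem_branch

lemma IsTree.eq_of_adj_of_mem_branch (hT : T.IsTree) {x y z z' : V} (hxy : T.Adj x y)
    (hz : z ∈ T.branch x y) (hz' : z' ∉ T.branch x y) (hzz' : T.Adj z z') :
    z = y ∧ z' = x := by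
  rw [hT.mem_branch_iff hxy] at hz hz'
  have := hT.dist_eq_dist_add_one_of_adj z' hxy
  have := hT.dist_eq_dist_add_one_of_adj x hzz'
  have := hT.dist_eq_dist_add_one_of_adj y hzz'
  have := T.dist_comm (u := x) (v := z)
  have := T.dist_comm (u := x) (v := z')
  have := T.dist_comm (u := y) (v := z)
  have := T.dist_comm (u := y) (v := z')
  by_cases hzy : z = y
  · subst hzy
    have : T.dist z z = 0 := dist_self
    have := dist_eq_one_iff_adj.mpr hzz'
    exact ⟨rfl, hT.connected.dist_eq_zero_iff.mp (by omega)⟩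
  -- the neighbour of `z` towards `y` is also its neighbour towards `x`, hence `z'`, which is
  -- farther from `y` than `z`
  obtain ⟨w, hzw, hw⟩ := hT.connected.exists_adj_dist_add_one hzy
  have := hT.connected.dist_triangle (u := x) (v := y) (w := w)
  have := dist_eq_one_iff_adj.mpr hxy
  have := hT.dist_eq_dist_add_one_of_adj x hzw
  have hwz' : w = z' := hT.eq_of_adj_of_dist_add_one x hzw hzz' (by omega) (by omega)
  subst hwz'
  omega

end SimpleGraph

section VertexCover

variable {V : Type*} {T : SimpleGraph V} {U : Set V}

lemma isMinimalVertexCover_compl {E : Set V} (hE : IsIndepSet T E)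
    (hdom : ∀ v ∉ E, ∃ d ∈ E, T.Adj v d) : IsMinimalVertexCover T Eᶜ := by
  refine ⟨fun v w hvw => ?_, fun S hS hScov => ?_⟩
  · by_contra! h
    exact hE (not_not.mp h.1) (not_not.mp h.2) hvw
  · obtain ⟨v, hvE, hvS⟩ := Set.exists_of_ssubset hS
    obtain ⟨d, hd, hvd⟩ := hdom v hvE
    rcases hScov hvd with h | h
    · exact hvS h
    · exact hS.subset h hd

lemma ExtVC.exists_indep_dominating (h : ExtVC T U) :
    ∃ D : Set V, IsIndepSet T D ∧ Disjoint D U ∧ ∀ u ∈ U, ∃ d ∈ D, T.Adj u d := by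
  obtain ⟨S, hUS, hS, hmin⟩ := h
  refine ⟨Sᶜ, fun v w hv hw hvw => (hS hvw).elim hv hw,
    Set.disjoint_compl_left_iff_subset.mpr hUS, fun u hu => ?_⟩
  -- removing `u` from `S` uncovers an edge at `u`, whose other end lies outside `S`
  obtain ⟨v, w, hvw, hcov⟩ : ∃ v w, T.Adj v w ∧ ¬ (v ∈ S \ {u} ∨ w ∈ S \ {u}) := by
    simpa [IsVertexCover] using hmin (S \ {u}) (Set.sdiff_singleton_ssubset.mpr (hUS hu))
  simp only [Set.mem_sdiff, Set.mem_singleton_iff, not_or, not_and, not_not] at hcov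
  rcases hS hvw with hv | hw
  · obtain rfl := hcov.1 hv
    exact ⟨w, fun hw => hvw.ne (hcov.2 hw).symm, hvw⟩
  · obtain rfl := hcov.2 hw
    exact ⟨v, fun hv => hvw.ne (hcov.1 hv), hvw.symm⟩

lemma ExtVC.of_indep_dominating [Finite V] {D : Set V} (hD : IsIndepSet T D)
    (hDU : Disjoint D U) (hdom : ∀ u ∈ U, ∃ d ∈ D, T.Adj u d) : ExtVC T U := by
  obtain ⟨E, hDE, hE⟩ :=
    Finite.exists_le_maximal (p := fun E : Set V => IsIndepSet T E ∧ Disjoint E U) ⟨hD, hDU⟩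
  refine ⟨Eᶜ, hE.1.2.subset_compl_left,
    isMinimalVertexCover_compl hE.1.1 fun v hvE => ?_⟩
  by_cases hvU : v ∈ U
  · obtain ⟨d, hd, hvd⟩ := hdom v hvU
    exact ⟨d, hDE hd, hvd⟩
  by_contra! hv
  have hindep : IsIndepSet T (insert v E) := by
    rintro x y (rfl | hx) (rfl | hy) hxy
    · exact hxy.ne rfl
    · exact hv y hy hxy
    · exact hv x hx hxy.symm
    · exact hE.1.1 hx hy hxy
  exact hvE (hE.2 ⟨hindep, Set.disjoint_insert_left.mpr ⟨hvU, hE.1.2⟩⟩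
    (Set.subset_insert v E) (Set.mem_insert v E))

end VertexCover

section

variable {V : Type*} {G : SimpleGraph V} {V' B : Set V}

lemma BWTree.subset (h : BWTree G V' B) : B ⊆ V' := by
  induction h with
  | base x => exact subset_rfl
  | step V' B x a b c _ _ _ _ _ _ _ _ _ _ _ _ _ ih => exact Set.union_subset_union ih (by simp)

lemma BWTree.connected (h : BWTree G V' B) : (G.induce V').Connected := by
  induction h with
  | base x =>
    rw [SimpleGraph.induce_singleton_eq_top]
    exact SimpleGraph.connected_top
  | step V' B x a b c hbw hx _ _ _ _ _ _ hxa hab hbc _ _ ih =>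
    have hpath : (G.induce {a, b, c}).Connected := by
      have habc : ({a, b, c} : Set V) = {a, b} ∪ {b, c} := by
        ext; simp only [Set.mem_insert_iff, Set.mem_singleton_iff, Set.mem_union]; tauto
      rw [habc]
      exact SimpleGraph.induce_union_connected
        (SimpleGraph.induce_pair_connected_of_adj hab).preconnected
        (SimpleGraph.induce_pair_connected_of_adj hbc).preconnected ⟨b, by simp⟩
    exact SimpleGraph.connected_induce_union ih.preconnected hpath.preconnected (hbw.subset hx)
      (by simp) hxa

lemma BWTree.not_isIndepSet (h : BWTree G V' B) {D : Set V}
    (hdom : ∀ u ∈ B, ∃ d ∈ D ∩ V', G.Adj u d) : ¬ IsIndepSet G D := by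
  intro hD
  induction h with
  | base x =>
    obtain ⟨d, ⟨-, rfl⟩, hxd⟩ := hdom x rfl
    exact hxd.ne rfl
  | step V' B x a b c hbw _ _ _ _ _ hac _ _ hab hbc hnac hattach ih =>
    -- the new black leaf `c` can only be dominated by `b`
    have hbD : b ∈ D := by
      obtain ⟨d, ⟨hdD, hd⟩, hcd⟩ := hdom c (Or.inr (by simp))
      rcases hd with hd | rfl | rfl | rfl
      · exact absurd (hattach d hd c (by simp) hcd.symm).2 hac.symm
      · exact absurd hcd.symm hnac
      · exact hdD
      · exact absurd hcd G.irrefl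
    refine ih fun u hu => ?_
    obtain ⟨d, ⟨hdD, hd⟩, hud⟩ := hdom u (Or.inl hu)
    rcases hd with hd | hd
    · exact ⟨d, ⟨hdD, hd⟩, hud⟩
    · obtain ⟨-, rfl⟩ := hattach u (hbw.subset hu) d hd hud
      exact absurd hab (hD hdD hbD)

lemma BWTree.attach {T : SimpleGraph V} (hT : T.IsTree) {U C : Set V} (hU : IsIndepSet T U)
    (h : BWTree T C (U ∩ C)) {x a b c : V} (hx : x ∈ U ∩ C) (hxa : T.Adj x a) (hab : T.Adj a b)
    (hbc : T.Adj b c) (hc : c ∈ U) (hC : Disjoint C (T.branch x a)) :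
    BWTree T (C ∪ {a, b, c}) (U ∩ (C ∪ {a, b, c})) := by
  have haU : a ∉ U := fun ha => hU hx.1 ha hxa
  have hbU : b ∉ U := fun hb => hU hb hc hbc
  have hxb : x ≠ b := fun h => hbU (h ▸ hx.1)
  have hac : a ≠ c := fun h => haU (h ▸ hc)
  have hpath := hT.insert_subset_branch hxa hab hbc hxb hac
  have hout : ∀ z ∈ ({a, b, c} : Set V), z ∉ C := fun z hz hzC =>
    Set.disjoint_left.mp hC hzC (hpath hz)
  have hblack : U ∩ (C ∪ {a, b, c}) = U ∩ C ∪ {c} := by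
    ext w
    simp only [Set.mem_inter_iff, Set.mem_union, Set.mem_insert_iff, Set.mem_singleton_iff]
    grind
  rw [hblack]
  refine .step C _ x a b c h hx (hout a (by simp)) (hout b (by simp)) (hout c (by simp))
    hab.ne hac hbc.ne hxa hab hbc (hT.not_adj_of_adj_of_adj hab hbc) fun y hy z hz hyz => ?_
  have := hT.eq_of_adj_of_mem_branch hxa (hpath hz) (Set.disjoint_left.mp hC hy) hyz.symm
  exact ⟨this.2, this.1⟩

end

namespace ExtVC

variable {V : Type*}

/-- Any `𝒯`-tree through `u` avoiding the branches at `u` towards `s` grows into these branches,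
saturating `s` and all new black vertices: a partial obstruction hanging from `u`. -/
def Extendable (T : SimpleGraph V) (U : Set V) (u : V) (s : Set V) : Prop :=
  ∀ C : Set V, BWTree T C (U ∩ C) → u ∈ C → (∀ a ∈ s, Disjoint C (T.branch u a)) →
    ∃ C' : Set V, C ⊆ C' ∧ BWTree T C' (U ∩ C') ∧ C' ⊆ C ∪ ⋃ a ∈ s, T.branch u a ∧ s ⊆ C' ∧
      ∀ w ∈ U ∩ (C' \ C), T.neighborSet w ⊆ C'

/-- Any independent set dominating `U` from outside `U` has to use the edge `ub`. -/
def Forced (T : SimpleGraph V) (U : Set V) (u b : V) : Prop :=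
  T.Adj u b ∧ Extendable T U u (T.neighborSet u \ {b})

/-- `a` cannot be used by `u`: its neighbour `b` is needed by `v`. -/
def Blocked (T : SimpleGraph V) (U : Set V) (u a : V) : Prop :=
  ∃ b v, T.Adj a b ∧ b ≠ u ∧ T.Adj b v ∧ v ∈ U ∧ Forced T U v b

variable {T : SimpleGraph V} {U : Set V} {u : V}

lemma extendable_empty : Extendable T U u ∅ := fun C hC _ _ =>
  ⟨C, subset_rfl, hC, Set.subset_union_left, Set.empty_subset _, by simp⟩

lemma Extendable.union (hT : T.IsTree) {s t : Set V} (hs : Extendable T U u s)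
    (ht : Extendable T U u t) (hsu : s ⊆ T.neighborSet u) (htu : t ⊆ T.neighborSet u)
    (hst : Disjoint s t) : Extendable T U u (s ∪ t) := by
  intro C hC huC hCst
  obtain ⟨C₁, hCC₁, hC₁, hC₁s, hsC₁, hfull₁⟩ :=
    hs C hC huC fun a ha => hCst a (Or.inl ha)
  have hC₁t : ∀ b ∈ t, Disjoint C₁ (T.branch u b) := by
    refine fun b hb => (Set.disjoint_union_left.mpr ⟨hCst b (Or.inr hb), ?_⟩).mono_left hC₁s
    refine Set.disjoint_iUnion₂_left.mpr fun a ha => hT.disjoint_branch (hsu ha) (htu hb) ?_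
    exact fun hab => Set.disjoint_left.mp hst ha (hab ▸ hb)
  obtain ⟨C₂, hC₁C₂, hC₂, hC₂t, htC₂, hfull₂⟩ := ht C₁ hC₁ (hCC₁ huC) hC₁t
  refine ⟨C₂, hCC₁.trans hC₁C₂, hC₂, ?_, Set.union_subset (hsC₁.trans hC₁C₂) htC₂, ?_⟩
  · rw [Set.biUnion_union, ← Set.union_assoc]
    exact hC₂t.trans (Set.union_subset_union_left _ hC₁s)
  · rintro w ⟨hwU, hwC₂, hwC⟩
    by_cases hwC₁ : w ∈ C₁
    · exact (hfull₁ w ⟨hwU, hwC₁, hwC⟩).trans hC₁C₂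
    · exact hfull₂ w ⟨hwU, hwC₂, hwC₁⟩

lemma Blocked.extendable (hT : T.IsTree) (hU : IsIndepSet T U) (hu : u ∈ U) {a : V}
    (hua : T.Adj u a) (h : Blocked T U u a) : Extendable T U u {a} := by
  obtain ⟨b, v, hab, hbu, hbv, hv, -, hext⟩ := h
  intro C hC huC hCa
  replace hCa : Disjoint C (T.branch u a) := hCa a rfl
  have hav : a ≠ v := fun h => hU hu (h ▸ hv) hua
  have hbranch : T.branch b v ⊆ T.branch u a :=
    (hT.branch_subset_branch hab hbv hav).trans (hT.branch_subset_branch hua hab hbu.symm)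
  have hC₁ := hC.attach hT hU ⟨hu, huC⟩ hua hab hbv hv hCa
  have hC₁v : ∀ a' ∈ T.neighborSet v \ {b}, Disjoint (C ∪ {a, b, v}) (T.branch v a') := by
    rintro a' ⟨hva', hba'⟩
    replace hba' : b ≠ a' := Ne.symm hba'
    have hsub : T.branch v a' ⊆ T.branch b v := hT.branch_subset_branch hbv hva' hba'
    exact Set.disjoint_union_left.mpr ⟨(hCa.mono_right hbranch).mono_right hsub,
      hT.disjoint_branch_of_path hab hbv hva' hav hba'⟩
  obtain ⟨C₂, hC₁C₂, hC₂, hC₂sub, hnbr, hfull⟩ := hext _ hC₁ (by simp) hC₁v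
  refine ⟨C₂, Set.subset_union_left.trans hC₁C₂, hC₂, ?_, by simpa using hC₁C₂ (by simp), ?_⟩
  · rw [Set.biUnion_singleton]
    refine hC₂sub.trans (Set.union_subset (Set.union_subset_union_right _ ?_) ?_)
    · exact hT.insert_subset_branch hua hab hbv hbu.symm hav
    · refine Set.iUnion₂_subset fun a' ⟨hva', hba'⟩ => ?_
      exact ((hT.branch_subset_branch hbv hva' (Ne.symm hba')).trans hbranch).trans
        Set.subset_union_right
  · rintro w ⟨hwU, hwC₂, hwC⟩
    by_cases hwC₁ : w ∈ C ∪ {a, b, v}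
    · obtain rfl : w = v := by
        rcases hwC₁ with h | rfl | rfl | rfl
        · exact absurd h hwC
        · exact absurd hua (hU hu hwU)
        · exact absurd hbv (hU hwU hv)
        · rfl
      intro z hz
      by_cases hzb : z = b
      · exact hC₁C₂ (by simp [hzb])
      · exact hnbr ⟨hz, hzb⟩
    · exact hfull w ⟨hwU, hwC₂, hwC₁⟩

lemma extendable_of_forall_blocked (hT : T.IsTree) (hU : IsIndepSet T U) (hu : u ∈ U)
    {s : Set V} (hs : s.Finite) (h : ∀ a ∈ s, T.Adj u a ∧ Blocked T U u a) :
    Extendable T U u s := by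
  induction s, hs using Set.Finite.induction_on with
  | empty => exact extendable_empty
  | @insert a s has _ ih =>
    have ha := h a (Set.mem_insert a s)
    have hs := fun b hb => h b (Set.mem_insert_of_mem a hb)
    rw [Set.insert_eq]
    exact (ha.2.extendable hT hU hu ha.1).union hT (ih hs) (Set.singleton_subset_iff.mpr ha.1)
      (fun b hb => (hs b hb).1) (Set.disjoint_singleton_left.mpr has)

lemma Forced.extendable_of_blocked (hT : T.IsTree) (hU : IsIndepSet T U) (hu : u ∈ U) {b : V}
    (hF : Forced T U u b) (hB : Blocked T U u b) : Extendable T U u (T.neighborSet u) := by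
  have hb : {b} ⊆ T.neighborSet u := Set.singleton_subset_iff.mpr hF.1
  simpa [Set.sdiff_union_of_subset hb] using
    hF.2.union hT (hB.extendable hT hU hu hF.1) Set.sdiff_subset hb Set.disjoint_sdiff_left

lemma exists_obstruction_of_extendable (hu : u ∈ U) (h : Extendable T U u (T.neighborSet u)) :
    ∃ V' : Set V, BWTree T V' (U ∩ V') ∧ ∀ w ∈ U ∩ V', T.neighborSet w ⊆ V' := by
  have hbase : BWTree T {u} (U ∩ {u}) := by
    rw [Set.inter_singleton_of_mem hu]
    exact .base u
  obtain ⟨C, -, hC, -, hnbr, hfull⟩ := h {u} hbase rfl fun a _ =>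
    Set.disjoint_singleton_left.mpr SimpleGraph.left_notMem_branch
  refine ⟨C, hC, fun w hw => ?_⟩
  by_cases hwu : w = u
  · exact hwu ▸ hnbr
  · exact hfull w ⟨hw.1, hw.2, hwu⟩

lemma exists_adj_not_blocked_ne [Finite V] (hT : T.IsTree) (hU : IsIndepSet T U)
    (hobs : ∀ u ∈ U, ¬ Extendable T U u (T.neighborSet u)) (hu : u ∈ U)
    (hnf : ∀ b, ¬ Forced T U u b) (p : V) :
    ∃ a, T.Adj u a ∧ ¬ Blocked T U u a ∧ a ≠ p := by
  by_contra! h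
  have hext := extendable_of_forall_blocked hT hU hu (s := T.neighborSet u \ {p})
    (Set.toFinite _) fun a ⟨ha, hap⟩ => ⟨ha, by_contra fun hb => hap (h a ha hb)⟩
  by_cases hup : T.Adj u p
  · exact hnf p ⟨hup, hext⟩
  · exact hobs u hu (by rwa [Set.sdiff_singleton_eq_self (s := T.neighborSet u) hup] at hext)

lemma exists_adj_not_blocked_dist_eq_add_one [Finite V] (hT : T.IsTree) (hU : IsIndepSet T U)
    (hobs : ∀ u ∈ U, ¬ Extendable T U u (T.neighborSet u)) (hu : u ∈ U)
    (hnf : ∀ b, ¬ Forced T U u b) (r : V) :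
    ∃ a, T.Adj u a ∧ ¬ Blocked T U u a ∧ T.dist r a = T.dist r u + 1 := by
  obtain ⟨a, ha, haB, -⟩ := exists_adj_not_blocked_ne hT hU hobs hu hnf u
  rcases hT.dist_eq_dist_add_one_of_adj r ha with h | h
  · obtain ⟨a', ha', ha'B, hne⟩ := exists_adj_not_blocked_ne hT hU hobs hu hnf a
    refine ⟨a', ha', ha'B, ?_⟩
    rcases hT.dist_eq_dist_add_one_of_adj r ha' with h' | h'
    · exact absurd (hT.eq_of_adj_of_dist_add_one r ha' ha h'.symm h.symm) hne
    · exact h'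
  · exact ⟨a, ha, haB, h⟩

lemma exists_indep_dominating_of_forall_not_extendable [Finite V] (hT : T.IsTree)
    (hU : IsIndepSet T U)
    (hobs : ∀ u ∈ U, ¬ Extendable T U u (T.neighborSet u)) :
    ∃ D : Set V, IsIndepSet T D ∧ Disjoint D U ∧ ∀ u ∈ U, ∃ d ∈ D, T.Adj u d := by
  obtain ⟨r⟩ := hT.connected.nonempty
  have hFB : ∀ u ∈ U, ∀ b, Forced T U u b → ¬ Blocked T U u b := fun u hu b hF hB =>
    hobs u hu (hF.extendable_of_blocked hT hU hu hB)
  -- every `u ∈ U` picks its forced neighbour, or else an unblocked child for the root `r`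
  refine ⟨{v | ∃ u ∈ U, T.Adj u v ∧ ¬ Blocked T U u v ∧
    (Forced T U u v ∨ (∀ b, ¬ Forced T U u b) ∧ T.dist r v = T.dist r u + 1)}, ?_, ?_, ?_⟩
  · rintro v w ⟨u, hu, huv, hvB, hv⟩ ⟨u', hu', hu'w, hwB, hw⟩ hvw
    have hvU : v ∉ U := fun h => hU hu h huv
    have hwU : w ∉ U := fun h => hU hu' h hu'w
    rcases hw with hw | ⟨-, hw⟩
    · exact hvB ⟨w, u', hvw, fun h => hwU (h ▸ hu), hu'w.symm, hu', hw⟩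
    rcases hv with hv | ⟨-, hv⟩
    · exact hwB ⟨v, u, hvw.symm, fun h => hvU (h ▸ hu'), huv.symm, hu, hv⟩
    rcases hT.dist_eq_dist_add_one_of_adj r hvw with h | h
    · exact hwU (hT.eq_of_adj_of_dist_add_one r hvw huv.symm h.symm hv.symm ▸ hu)
    · exact hvU (hT.eq_of_adj_of_dist_add_one r hvw.symm hu'w.symm h.symm hw.symm ▸ hu')
  · exact Set.disjoint_left.mpr fun v ⟨u, hu, huv, _⟩ hv => hU hu hv huv
  · intro u hu
    by_cases hf : ∃ b, Forced T U u b
    · obtain ⟨b, hb⟩ := hf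
      exact ⟨b, ⟨u, hu, hb.1, hFB u hu b hb, Or.inl hb⟩, hb.1⟩
    · rw [not_exists] at hf
      obtain ⟨a, ha, haB, hr⟩ := exists_adj_not_blocked_dist_eq_add_one hT hU hobs hu hf r
      exact ⟨a, ⟨u, hu, ha, haB, Or.inr ⟨hf, hr⟩⟩, ha⟩

end ExtVC

/-- Let `T` be a finite tree and `U` an independent set of vertices. Then
`(T, U)` is a yes-instance of Ext VC iff there is no subtree `T'` of `T` (i.e., a connected
induced subgraph, given by its vertex set `V'`) that is induced edge full with respect to
`(T, U)` (every `u ∈ U ∩ V'` has the same degree in `T'` as in `T`, i.e., all its neighbors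
lie in `V'`) such that `T'[(U ∩ V') → black]` belongs to the class `𝒯`. -/
theorem statement_8 {V : Type*} [Fintype V] (T : SimpleGraph V) (hT : T.IsTree)
    (U : Set V) (hU : IsIndepSet T U) :
    ExtVC T U ↔
      ¬ ∃ V' : Set V, (T.induce V').Connected ∧
          (∀ u ∈ U ∩ V', T.neighborSet u ⊆ V') ∧
          BWTree T V' (U ∩ V') := by
  constructor
  · rintro hext ⟨V', -, hfull, hbw⟩
    obtain ⟨D, hD, -, hdom⟩ := hext.exists_indep_dominating
    refine hbw.not_isIndepSet (fun u hu => ?_) hD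
    obtain ⟨d, hd, hud⟩ := hdom u hu.1
    exact ⟨d, ⟨hd, hfull u hu hud⟩, hud⟩
  · intro hno
    obtain ⟨D, hD, hDU, hdom⟩ :=
      ExtVC.exists_indep_dominating_of_forall_not_extendable hT hU fun u hu hext => hno <| by
        obtain ⟨V', hbw, hfull⟩ := ExtVC.exists_obstruction_of_extendable hu hext
        exact ⟨V', hbw.connected, hfull, hbw⟩
    exact .of_indep_dominating hD hDU hdom
end

section
/- In every black-and-white tree T in the class 𝒯, every leaf is black. Moreover, for every black vertex v of T, every vertex at distance one or two from v is white, and every vertex at distance three from v is black; in particular, every vertex of T lies in the closed neighborhood of the set of black vertices. -/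
lemma bw_inv {V : Type*} (G : SimpleGraph V) {V' B : Set V} (h : BWTree G V' B) :
    B ⊆ V' ∧
    (∀ u ∈ B, ∀ v ∈ B, ¬ G.Adj u v) ∧
    (∀ w ∈ V', w ∉ B →
      (∃ u, (u ∈ V' ∧ u ∉ B ∧ G.Adj w u) ∧
        ∀ u', u' ∈ V' → u' ∉ B → G.Adj w u' → u' = u) ∧
      (∃ u, (u ∈ B ∧ G.Adj w u) ∧ ∀ u', u' ∈ B → G.Adj w u' → u' = u)) := by
  induction h with
  | base x =>
    refine ⟨subset_rfl, ?_, ?_⟩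
    · rintro u rfl v rfl hadj; exact G.irrefl hadj
    · rintro w rfl hw; exact absurd rfl hw
  | step V' B x a b c hT hx ha hb hc hab hac hbc hxa hab' hbc' hnac hres ih =>
    obtain ⟨hBV, hind, hwh⟩ := ih
    have haB : a ∉ B := fun h => ha (hBV h)
    have hbB : b ∉ B := fun h => hb (hBV h)
    have hcB : c ∉ B := fun h => hc (hBV h)
    have hxV : x ∈ V' := hBV hx
    have hmem : ∀ z : V, z ∈ ({a, b, c} : Set V) ↔ z = a ∨ z = b ∨ z = c := by
      intro z; simp [Set.mem_insert_iff]
    refine ⟨?_, ?_, ?_⟩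
    · rintro u (hu | rfl)
      · exact Or.inl (hBV hu)
      · exact Or.inr (by simp)
    · rintro u (hu | huc) v (hv | hvc) hadj
      · exact hind u hu v hv hadj
      · rw [Set.mem_singleton_iff] at hvc; rw [hvc] at hadj
        exact hac ((hres u (hBV hu) c (Or.inr (Or.inr rfl)) hadj).2).symm
      · rw [Set.mem_singleton_iff] at huc; rw [huc] at hadj
        exact hac ((hres v (hBV hv) c (Or.inr (Or.inr rfl)) hadj.symm).2).symm
      · rw [Set.mem_singleton_iff] at huc hvc; rw [huc, hvc] at hadj
        exact G.irrefl hadj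
    · rintro w hw hwB
      have hwBc : w ∉ B := fun h => hwB (Or.inl h)
      have hwc : w ≠ c := fun h => hwB (Or.inr (h ▸ rfl))
      rcases hw with hwV | hwn
      · -- old white vertex
        have hwx : w ≠ x := fun h => hwBc (h ▸ hx)
        obtain ⟨⟨u, ⟨huV, huB, huA⟩, huu⟩, ⟨t, ⟨htB, htA⟩, htt⟩⟩ := hwh w hwV hwBc
        constructor
        · refine ⟨u, ⟨Or.inl huV, fun h => ?_, huA⟩, ?_⟩
          · rcases h with h | h
            · exact huB h
            · exact hc (Set.mem_singleton_iff.mp h ▸ huV)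
          · rintro u' (hu'V | hu'n) hu'B hadj
            · exact huu u' hu'V (fun h => hu'B (Or.inl h)) hadj
            · exact absurd (hres w hwV u' ((hmem u').mp hu'n) hadj).1 hwx
        · refine ⟨t, ⟨Or.inl htB, htA⟩, ?_⟩
          rintro u' (hu'B | hu'c) hadj
          · exact htt u' hu'B hadj
          · rw [Set.mem_singleton_iff] at hu'c; rw [hu'c] at hadj
            exact absurd ((hres w hwV c (Or.inr (Or.inr rfl)) hadj).2.symm ▸ (hres w hwV c (Or.inr (Or.inr rfl)) hadj).2) (fun _ => hac (hres w hwV c (Or.inr (Or.inr rfl)) hadj).2.symm)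
      · rcases (hmem w).mp hwn with hwa | hwb | hwc2
        · -- w = a
          rw [hwa] at hwB hwc ⊢; clear hwa hwn
          constructor
          · refine ⟨b, ⟨Or.inr (by simp), fun h => ?_, hab'⟩, ?_⟩
            · rcases h with h | h
              · exact hbB h
              · exact hbc (Set.mem_singleton_iff.mp h)
            · rintro u' (hu'V | hu'n) hu'B hadj
              · exact absurd ((hres u' hu'V a (Or.inl rfl) hadj.symm).1 ▸ hx : u' ∈ B)
                  (fun h => hu'B (Or.inl ((hres u' hu'V a (Or.inl rfl) hadj.symm).1 ▸ hx)))
              · rcases (hmem u').mp hu'n with rfl | rfl | rfl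
                · exact absurd hadj G.irrefl
                · rfl
                · exact absurd hadj hnac
          · refine ⟨x, ⟨Or.inl hx, hxa.symm⟩, ?_⟩
            rintro u' (hu'B | hu'c) hadj
            · exact (hres u' (hBV hu'B) a (Or.inl rfl) hadj.symm).1
            · rw [Set.mem_singleton_iff] at hu'c; rw [hu'c] at hadj
              exact absurd hadj hnac
        · -- w = b
          rw [hwb] at hwB hwc ⊢; clear hwb hwn
          constructor
          · refine ⟨a, ⟨Or.inr (by simp), fun h => ?_, hab'.symm⟩, ?_⟩
            · rcases h with h | h
              · exact haB h
              · exact hac (Set.mem_singleton_iff.mp h)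
            · rintro u' (hu'V | hu'n) hu'B hadj
              · exact absurd (hres u' hu'V b (Or.inr (Or.inl rfl)) hadj.symm).2.symm hab
              · rcases (hmem u').mp hu'n with rfl | rfl | rfl
                · rfl
                · exact absurd hadj G.irrefl
                · exact absurd (Or.inr rfl : u' ∈ B ∪ {u'}) hu'B
          · refine ⟨c, ⟨Or.inr rfl, hbc'⟩, ?_⟩
            rintro u' (hu'B | hu'c) hadj
            · exact absurd (hres u' (hBV hu'B) b (Or.inr (Or.inl rfl)) hadj.symm).2.symm hab
            · exact hu'c
        · exact absurd hwc2 hwc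

/-- In every black-and-white tree of the class `𝒯` (realized as the subgraph of
`G` induced by `V'`, with black set `B`): every leaf (vertex of degree one of the tree) is
black; every vertex at distance one or two from a black vertex is white; every vertex at
distance three from a black vertex is black; and every vertex lies in the closed neighborhood
of the set of black vertices. -/
theorem statement_9 {V : Type*} [Fintype V] (G : SimpleGraph V) (V' B : Set V)
    (h : BWTree G V' B) :
    (∀ v : ↥V', ((G.induce V').neighborSet v).ncard = 1 → (v : V) ∈ B) ∧
    (∀ v w : ↥V', (v : V) ∈ B →
      ((G.induce V').dist v w = 1 ∨ (G.induce V').dist v w = 2) → (w : V) ∉ B) ∧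
    (∀ v w : ↥V', (v : V) ∈ B → (G.induce V').dist v w = 3 → (w : V) ∈ B) ∧
    (∀ v : ↥V', ∃ b ∈ B, (v : V) = b ∨ G.Adj (v : V) b) := by
  obtain ⟨hBV, hind, hwh⟩ := bw_inv G h
  set H := G.induce V' with hH
  have hAdj : ∀ u v : ↥V', H.Adj u v ↔ G.Adj ↑u ↑v := fun u v => Iff.rfl
  have part2 : ∀ v w : ↥V', (v : V) ∈ B →
      (H.dist v w = 1 ∨ H.dist v w = 2) → (w : V) ∉ B := by
    intro v w hv hd hw
    rcases hd with hd | hd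
    · -- distance 1
      obtain ⟨p, hp⟩ := H.exists_walk_of_dist_ne_zero (show H.dist v w ≠ 0 by omega)
      rw [hd] at hp
      cases p with
      | nil => simp at hp
      | cons h q =>
        cases q with
        | nil => exact hind _ hv _ hw ((hAdj _ _).mp h)
        | cons h' q' => simp [SimpleGraph.Walk.length_cons] at hp
    · obtain ⟨p, hp⟩ := H.exists_walk_of_dist_ne_zero (show H.dist v w ≠ 0 by omega)
      rw [hd] at hp
      cases p with
      | nil => simp at hp
      | cons h q =>
        cases q with
        | nil => simp at hp
        | cons h' q' =>
          cases q' with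
          | nil =>
            -- v -h- u -h'- w
            rename_i u
            have hu : (u : V) ∉ B := fun huB => hind _ hv _ huB ((hAdj _ _).mp h)
            obtain ⟨_, ⟨t, ⟨htB, htA⟩, htt⟩⟩ := hwh u u.2 hu
            have h1 : (v : V) = t := htt _ hv ((hAdj _ _).mp h).symm
            have h2 : (w : V) = t := htt _ hw ((hAdj _ _).mp h')
            have : v = w := Subtype.ext (h1.trans h2.symm)
            rw [this] at hd
            simp [SimpleGraph.dist_self] at hd
          | cons h'' q'' => simp [SimpleGraph.Walk.length_cons] at hp
  refine ⟨?_, part2, ?_, ?_⟩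
  · -- leaves are black
    intro v hcard
    by_contra hv
    obtain ⟨⟨u, ⟨huV, huB, huA⟩, _⟩, ⟨t, ⟨htB, htA⟩, _⟩⟩ := hwh v v.2 hv
    obtain ⟨z, hz⟩ := Set.ncard_eq_one.mp hcard
    have h1 : (⟨u, huV⟩ : ↥V') ∈ H.neighborSet v := (hAdj _ _).mpr huA
    have h2 : (⟨t, hBV htB⟩ : ↥V') ∈ H.neighborSet v := (hAdj _ _).mpr htA
    rw [hz] at h1 h2
    have : u = t := congrArg Subtype.val (h1.trans h2.symm)
    exact huB (this ▸ htB)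
  · -- distance 3
    intro v w hv hd
    by_contra hw
    obtain ⟨p, hp⟩ := H.exists_walk_of_dist_ne_zero (show H.dist v w ≠ 0 by omega)
    rw [hd] at hp
    cases p with
    | nil => simp at hp
    | cons h q =>
      cases q with
      | nil => simp at hp
      | cons h' q' =>
        cases q' with
        | nil => simp at hp
        | cons h'' q'' =>
          cases q'' with
          | nil =>
            rename_i u1 u2
            have hu1 : (u1 : V) ∉ B := fun hB => hind _ hv _ hB ((hAdj _ _).mp h)
            -- dist v u2 = 2
            have hle : H.dist v u2 ≤ 2 := by
              have := H.dist_le ((SimpleGraph.Walk.cons h (SimpleGraph.Walk.cons h' SimpleGraph.Walk.nil)))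
              simpa using this
            have hge : 2 ≤ H.dist v u2 := by
              by_contra hlt
              push_neg at hlt
              have hr : H.Reachable v u2 :=
                ⟨SimpleGraph.Walk.cons h (SimpleGraph.Walk.cons h' SimpleGraph.Walk.nil)⟩
              obtain ⟨q, hq⟩ := hr.exists_walk_length_eq_dist
              have := H.dist_le (q.concat h'')
              rw [SimpleGraph.Walk.length_concat, hq, hd] at this
              omega
            have hd2 : H.dist v u2 = 2 := le_antisymm hle hge
            have hu2 : (u2 : V) ∉ B := part2 v u2 hv (Or.inr hd2)
            obtain ⟨⟨t, ⟨htV, htB, htA⟩, htt⟩, _⟩ := hwh u2 u2.2 hu2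
            have h1 : (u1 : V) = t := htt _ u1.2 hu1 ((hAdj _ _).mp h').symm
            have h2 : (w : V) = t := htt _ w.2 hw ((hAdj _ _).mp h'')
            have heq : u1 = w := Subtype.ext (h1.trans h2.symm)
            have : H.dist v u1 ≤ 1 := H.dist_le (SimpleGraph.Walk.cons h SimpleGraph.Walk.nil)
            rw [heq, hd] at this
            omega
          | cons h3 q3 => simp [SimpleGraph.Walk.length_cons] at hp
  · intro v
    by_cases hv : (v : V) ∈ B
    · exact ⟨v, hv, Or.inl rfl⟩
    · obtain ⟨_, ⟨t, ⟨htB, htA⟩, _⟩⟩ := hwh v v.2 hv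
      exact ⟨t, htB, Or.inr htA⟩
end

section
/- Let G=(V,E) be a finite simple graph and U ⊆ V. Then opt_MaxExtVC(G,U) + opt_MinExtIS(G, V\U) = |V|. -/
/-- `opt_MaxExtVC(G, U)`: the maximum of `|S ∩ U|` over all minimal vertex covers `S` of `G`. -/
noncomputable def optMaxExtVC {V : Type*} (G : SimpleGraph V) (U : Set V) : ℕ :=
  sSup {n : ℕ | ∃ S : Set V, IsMinimalVertexCover G S ∧ n = (S ∩ U).ncard}

/-- `opt_MinExtIS(G, U)`: the minimum of `|U| + |S ∩ (V \ U)|` over all maximal independent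
sets `S` of `G`. -/
noncomputable def optMinExtIS {V : Type*} (G : SimpleGraph V) (U : Set V) : ℕ :=
  sInf {n : ℕ | ∃ S : Set V, IsMaximalIndepSet G S ∧ n = U.ncard + (S ∩ Uᶜ).ncard}

/-!
Complementation `S ↦ Sᶜ` is a bijection between minimal vertex covers and maximal independent
sets, and `|S ∩ U| + |Uᶜ| + |Sᶜ ∩ U| = |V|`. So the values minimised by
`opt_MinExtIS(G, Uᶜ)` are exactly `|V| - n` for the values `n` maximised by `opt_MaxExtVC(G, U)`.
-/

section Graph

variable {V : Type*} (G : SimpleGraph V)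

lemma isVertexCover_iff_isIndepSet_compl (S : Set V) :
    IsVertexCover G S ↔ IsIndepSet G Sᶜ := by
  refine ⟨fun h u v hu hv huv => (h huv).elim hu hv, fun h u v huv => ?_⟩
  by_contra! hc
  exact h hc.1 hc.2 huv

lemma isMinimalVertexCover_iff_isMaximalIndepSet_compl (S : Set V) :
    IsMinimalVertexCover G S ↔ IsMaximalIndepSet G Sᶜ := by
  simp only [IsMinimalVertexCover, IsMaximalIndepSet, isVertexCover_iff_isIndepSet_compl]
  refine and_congr_right fun _ =>
    ⟨fun h T hT hTind => ?_, fun h T hT => h Tᶜ (compl_lt_compl_iff_lt.2 hT)⟩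
  exact h Tᶜ (compl_lt_compl_iff_lt.1 (by rwa [compl_compl])) (by rwa [compl_compl])

lemma exists_isMinimalVertexCover [Finite V] : ∃ S : Set V, IsMinimalVertexCover G S := by
  obtain ⟨S, -, hS⟩ := exists_minimal_le_of_wellFoundedLT (IsVertexCover G) Set.univ
    fun u _ _ => Or.inl (Set.mem_univ u)
  exact ⟨S, hS.prop, fun T hT hTS => hT.not_ge (hS.le_of_le hTS hT.le)⟩

end Graph

lemma Nat.sInf_image_tsub_eq_tsub_sSup {A : Set ℕ} {c : ℕ} (hA : A.Nonempty)
    (hc : ∀ n ∈ A, n ≤ c) : sInf ((c - ·) '' A) = c - sSup A := by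
  have hbdd : BddAbove A := ⟨c, hc⟩
  refine le_antisymm (Nat.sInf_le ⟨_, Nat.sSup_mem hA hbdd, rfl⟩) ?_
  refine le_csInf (hA.image _) ?_
  rintro _ ⟨n, hn, rfl⟩
  exact Nat.sub_le_sub_left (le_csSup hbdd hn) c

section Opt

variable {V : Type*} [Finite V] (G : SimpleGraph V) (U : Set V)

lemma optMaxExtVC_le_card : optMaxExtVC G U ≤ Nat.card V := by
  refine csSup_le' ?_
  rintro _ ⟨S, -, rfl⟩
  exact Set.ncard_le_card _

lemma ncard_inter_add_ncard_compl_add_ncard_compl_inter (S : Set V) :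
    (S ∩ U).ncard + (Uᶜ.ncard + (Sᶜ ∩ U).ncard) = Nat.card V := by
  rw [← Set.ncard_add_ncard_compl U, ← Set.ncard_inter_add_ncard_sdiff_eq_ncard U S,
    Set.sdiff_eq, Set.inter_comm U S, Set.inter_comm U Sᶜ]
  ring

lemma optMinExtIS_compl_eq_card_sub : optMinExtIS G Uᶜ = Nat.card V - optMaxExtVC G U := by
  rw [optMaxExtVC, ← Nat.sInf_image_tsub_eq_tsub_sSup, optMinExtIS, compl_compl]
  · congr 1
    ext n
    constructor
    · rintro ⟨S, hS, rfl⟩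
      refine ⟨_, ⟨Sᶜ, ?_, rfl⟩, ?_⟩
      · rwa [isMinimalVertexCover_iff_isMaximalIndepSet_compl, compl_compl]
      · have := ncard_inter_add_ncard_compl_add_ncard_compl_inter U Sᶜ
        rw [compl_compl] at this
        dsimp only
        omega
    · rintro ⟨_, ⟨S, hS, rfl⟩, rfl⟩
      refine ⟨Sᶜ, (isMinimalVertexCover_iff_isMaximalIndepSet_compl G S).1 hS, ?_⟩
      have := ncard_inter_add_ncard_compl_add_ncard_compl_inter U S
      dsimp only
      omega
  · obtain ⟨S, hS⟩ := exists_isMinimalVertexCover G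
    exact ⟨_, S, hS, rfl⟩
  · rintro _ ⟨S, -, rfl⟩
    exact Set.ncard_le_card _

end Opt

/-- `opt_MaxExtVC(G, U) + opt_MinExtIS(G, V \ U) = |V|`. -/
theorem statement_10 {V : Type*} [Fintype V] (G : SimpleGraph V) (U : Set V) :
    optMaxExtVC G U + optMinExtIS G Uᶜ = Fintype.card V := by
  rw [optMinExtIS_compl_eq_card_sub, ← Nat.card_eq_fintype_card]
  have := optMaxExtVC_le_card G U
  omega
end

section
/- Let G=(V,E) be a finite simple graph and let H=(V_H,E_H) be the graph with vertex set V_H = V ∪ V', where V' = {v' : v ∈ V} is a disjoint copy of V, and edge set E_H = E ∪ {vv' : v ∈ V}. Then for every natural number k, H has a minimal vertex cover containing at least k vertices of V' if and only if G has an independent set of size k; consequently, the maximum of |S ∩ V'| over all minimal vertex covers S of H equals the independence number α(G) of G. -/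
/-- The graph `H` built from `G`: its vertex set consists of two copies of `V`
(`Sum.inl` is the original copy `V`, `Sum.inr` is the copy `V' = {v' : v ∈ V}`), and its
edges are the edges of `G` on the first copy together with the perfect matching `v v'`. -/
def doubledGraph {V : Type*} (G : SimpleGraph V) : SimpleGraph (V ⊕ V) :=
  SimpleGraph.fromRel (fun x y =>
    match x, y with
    | .inl u, .inl v => G.Adj u v
    | .inl u, .inr v => u = v
    | _, _ => False)

/-!
A minimal vertex cover is exactly a vertex cover each of whose vertices has a neighbour outside
it. In `doubledGraph G` the only neighbour of `v'` is `v`, so a minimal cover containing `v'`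
misses `v`; as the cover must meet every edge of `G`, the vertices `v` with `v'` in the cover
form an independent set of `G`. Conversely, an independent set `I` yields the minimal cover
`(V \ I) ∪ I'`, whose trace on `V'` is `I'`.
-/

open Sum

section MinimalVertexCover

variable {V : Type*} {G : SimpleGraph V} {S : Set V}

theorem isMinimalVertexCover_iff :
    IsMinimalVertexCover G S ↔ IsVertexCover G S ∧ ∀ x ∈ S, ∃ y ∉ S, G.Adj x y := by
  refine ⟨fun ⟨hcover, hmin⟩ => ⟨hcover, fun x hx => ?_⟩, fun ⟨hcover, hnbr⟩ => ⟨hcover, ?_⟩⟩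
  · have hsmaller : S \ {x} ⊂ S := Set.sdiff_singleton_ssubset.2 hx
    by_contra! hall
    refine hmin _ hsmaller fun u v huv => ?_
    by_cases hu : u = x
    · subst hu
      exact .inr ⟨by_contra fun hv => hall v hv huv, fun hv => huv.ne hv.symm⟩
    · by_cases hv : v = x
      · subst hv
        exact .inl ⟨by_contra fun hu' => hall u hu' huv.symm, hu⟩
      · exact (hcover huv).imp (fun h => ⟨h, hu⟩) fun h => ⟨h, hv⟩
  · rintro T ⟨hTS, hST⟩ hT
    obtain ⟨x, hxS, hxT⟩ := Set.not_subset.1 hST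
    obtain ⟨y, hyS, hxy⟩ := hnbr x hxS
    exact (hT hxy).elim hxT fun hyT => hyS (hTS hyT)

end MinimalVertexCover

section DoubledGraph

variable {V : Type*} {G : SimpleGraph V}

@[simp]
theorem doubledGraph_adj_inl_inl {u v : V} :
    (doubledGraph G).Adj (inl u) (inl v) ↔ G.Adj u v := by
  simp only [doubledGraph, SimpleGraph.fromRel_adj, ne_eq, inl.injEq]
  exact ⟨fun h => h.2.elim id G.adj_symm, fun h => ⟨h.ne, .inl h⟩⟩

@[simp]
theorem doubledGraph_adj_inl_inr {u v : V} : (doubledGraph G).Adj (inl u) (inr v) ↔ u = v := by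
  simp [doubledGraph]

@[simp]
theorem doubledGraph_adj_inr_inl {u v : V} : (doubledGraph G).Adj (inr u) (inl v) ↔ u = v := by
  simp [doubledGraph, eq_comm]

@[simp]
theorem doubledGraph_adj_inr_inr {u v : V} : ¬ (doubledGraph G).Adj (inr u) (inr v) := by
  simp [doubledGraph]

theorem IsMinimalVertexCover.inl_notMem_of_inr_mem {S : Set (V ⊕ V)}
    (hS : IsMinimalVertexCover (doubledGraph G) S) {v : V} (hv : inr v ∈ S) : inl v ∉ S := by
  obtain ⟨y, hyS, hvy⟩ := (isMinimalVertexCover_iff.1 hS).2 _ hv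
  rcases y with u | u
  · obtain rfl : v = u := doubledGraph_adj_inr_inl.1 hvy
    exact hyS
  · exact (doubledGraph_adj_inr_inr hvy).elim

theorem IsMinimalVertexCover.isIndepSet_preimage_inr {S : Set (V ⊕ V)}
    (hS : IsMinimalVertexCover (doubledGraph G) S) : IsIndepSet G (inr ⁻¹' S) := by
  intro u v hu hv huv
  rcases hS.1 (doubledGraph_adj_inl_inl.2 huv) with hu' | hv'
  · exact hS.inl_notMem_of_inr_mem hu hu'
  · exact hS.inl_notMem_of_inr_mem hv hv'

def doubledCover (I : Set V) : Set (V ⊕ V) := inl '' Iᶜ ∪ inr '' I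

@[simp]
theorem inl_mem_doubledCover {I : Set V} {v : V} : inl v ∈ doubledCover I ↔ v ∉ I := by
  simp [doubledCover]

@[simp]
theorem inr_mem_doubledCover {I : Set V} {v : V} : inr v ∈ doubledCover I ↔ v ∈ I := by
  simp [doubledCover]


theorem IsIndepSet.isMinimalVertexCover_doubledCover {I : Set V} (hI : IsIndepSet G I) :
    IsMinimalVertexCover (doubledGraph G) (doubledCover I) := by
  refine isMinimalVertexCover_iff.2 ⟨?_, ?_⟩
  · rintro (u | u) (v | v) huv
    · simp only [doubledGraph_adj_inl_inl] at huv
      simp only [inl_mem_doubledCover]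
      by_contra! h
      exact hI h.1 h.2 huv
    all_goals simp_all [em, em']
  · rintro (v | v) hv
    · exact ⟨inr v, by simpa using hv, doubledGraph_adj_inl_inr.2 rfl⟩
    · exact ⟨inl v, by simpa using hv, doubledGraph_adj_inr_inl.2 rfl⟩

theorem ncard_inter_range_inr (S : Set (V ⊕ V)) :
    (S ∩ Set.range inr).ncard = (inr ⁻¹' S).ncard := by
  rw [← Set.image_preimage_eq_inter_range, Set.ncard_image_of_injective _ inr_injective]

theorem ncard_doubledCover_inter_range_inr (I : Set V) :
    (doubledCover I ∩ Set.range inr).ncard = I.ncard := by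
  rw [ncard_inter_range_inr]
  congr 1
  ext v
  exact inr_mem_doubledCover

theorem setOf_ncard_inter_range_inr_eq_setOf_ncard_indepSet :
    {n : ℕ | ∃ S : Set (V ⊕ V), IsMinimalVertexCover (doubledGraph G) S ∧
        n = (S ∩ Set.range inr).ncard} =
      {n : ℕ | ∃ I : Set V, IsIndepSet G I ∧ n = I.ncard} := by
  ext n
  constructor
  · rintro ⟨S, hS, rfl⟩
    exact ⟨inr ⁻¹' S, hS.isIndepSet_preimage_inr, ncard_inter_range_inr S⟩
  · rintro ⟨I, hI, rfl⟩
    exact ⟨doubledCover I, hI.isMinimalVertexCover_doubledCover,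
      (ncard_doubledCover_inter_range_inr I).symm⟩

end DoubledGraph

theorem statement_11_general {V : Type*} (G : SimpleGraph V) :
    (∀ k : ℕ,
      (∃ S : Set (V ⊕ V), IsMinimalVertexCover (doubledGraph G) S ∧
          k ≤ (S ∩ Set.range Sum.inr).ncard) ↔
        ∃ I : Set V, IsIndepSet G I ∧ I.ncard = k) ∧
    sSup {n : ℕ | ∃ S : Set (V ⊕ V), IsMinimalVertexCover (doubledGraph G) S ∧
          n = (S ∩ Set.range Sum.inr).ncard}
      = sSup {n : ℕ | ∃ I : Set V, IsIndepSet G I ∧ n = I.ncard} := by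
  refine ⟨fun k => ⟨?_, ?_⟩, congrArg sSup setOf_ncard_inter_range_inr_eq_setOf_ncard_indepSet⟩
  · rintro ⟨S, hS, hk⟩
    rw [ncard_inter_range_inr] at hk
    obtain ⟨I, hIS, rfl⟩ := Set.exists_subset_card_eq hk
    exact ⟨I, fun u v hu hv => hS.isIndepSet_preimage_inr (hIS hu) (hIS hv), rfl⟩
  · rintro ⟨I, hI, rfl⟩
    exact ⟨doubledCover I, hI.isMinimalVertexCover_doubledCover,
      (ncard_doubledCover_inter_range_inr I).ge⟩

/-- For every `k`, the graph `H = doubledGraph G` has a minimal vertex cover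
containing at least `k` vertices of the copy `V'` iff `G` has an independent set of size `k`;
consequently, the maximum of `|S ∩ V'|` over all minimal vertex covers `S` of `H` equals the
independence number `α(G)`. -/
theorem statement_11 {V : Type*} [Fintype V] (G : SimpleGraph V) :
    (∀ k : ℕ,
      (∃ S : Set (V ⊕ V), IsMinimalVertexCover (doubledGraph G) S ∧
          k ≤ (S ∩ Set.range Sum.inr).ncard) ↔
        ∃ I : Set V, IsIndepSet G I ∧ I.ncard = k) ∧
    sSup {n : ℕ | ∃ S : Set (V ⊕ V), IsMinimalVertexCover (doubledGraph G) S ∧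
          n = (S ∩ Set.range Sum.inr).ncard}
      = sSup {n : ℕ | ∃ I : Set V, IsIndepSet G I ∧ n = I.ncard} :=
  statement_11_general G
end

section
/- Let G=(V,E) be a finite simple bipartite graph without isolated vertices, with bipartition V = V_l ∪ V_r (every edge has one endpoint in V_l and one in V_r), and let U ⊆ V. Then both V_l and V_r are minimal vertex covers of G, and if V_l is a part with |V_l ∩ U| ≥ |V_r ∩ U|, then 2·|V_l ∩ U| ≥ opt_MaxExtVC(G,U). -/
lemma side_minimal_cover {V : Type*} (G : SimpleGraph V) (Vl Vr : Set V)
    (hdisj : Disjoint Vl Vr)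
    (hbip : ∀ ⦃u v : V⦄, G.Adj u v → (u ∈ Vl ∧ v ∈ Vr) ∨ (u ∈ Vr ∧ v ∈ Vl))
    (hnoiso : ∀ v : V, ∃ w : V, G.Adj v w) :
    IsMinimalVertexCover G Vl := by
  constructor
  · intro u v huv
    rcases hbip huv with ⟨h1, _⟩ | ⟨_, h2⟩
    · exact Or.inl h1
    · exact Or.inr h2
  · intro T hT hTcov
    obtain ⟨v, hvVl, hvT⟩ := Set.exists_of_ssubset hT
    obtain ⟨w, hvw⟩ := hnoiso v
    have hwVr : w ∈ Vr := by
      rcases hbip hvw with ⟨_, h⟩ | ⟨h, _⟩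
      · exact h
      · exact absurd hvVl (Set.disjoint_right.mp hdisj h)
    rcases hTcov hvw with h | h
    · exact hvT h
    · exact Set.disjoint_left.mp hdisj (hT.1 h) hwVr

/-- In a bipartite graph without isolated vertices, with bipartition
`V = V_l ∪ V_r`, both sides are minimal vertex covers, and if `V_l` is a side with
`|V_l ∩ U| ≥ |V_r ∩ U|` then `2·|V_l ∩ U| ≥ opt_MaxExtVC(G, U)`. -/
theorem statement_12 {V : Type*} [Fintype V] (G : SimpleGraph V) (Vl Vr U : Set V)
    (hcover : Vl ∪ Vr = Set.univ) (hdisj : Disjoint Vl Vr)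
    (hbip : ∀ ⦃u v : V⦄, G.Adj u v → (u ∈ Vl ∧ v ∈ Vr) ∨ (u ∈ Vr ∧ v ∈ Vl))
    (hnoiso : ∀ v : V, ∃ w : V, G.Adj v w) :
    IsMinimalVertexCover G Vl ∧ IsMinimalVertexCover G Vr ∧
      ((Vr ∩ U).ncard ≤ (Vl ∩ U).ncard →
        optMaxExtVC G U ≤ 2 * (Vl ∩ U).ncard) := by
  have hbip' : ∀ ⦃u v : V⦄, G.Adj u v → (u ∈ Vr ∧ v ∈ Vl) ∨ (u ∈ Vl ∧ v ∈ Vr) := by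
    intro u v h; exact (hbip h).symm
  refine ⟨side_minimal_cover G Vl Vr hdisj hbip hnoiso,
    side_minimal_cover G Vr Vl hdisj.symm hbip' hnoiso, ?_⟩
  intro hle
  apply csSup_le'
  rintro n ⟨S, hS, rfl⟩
  have hsub : S ∩ U ⊆ (Vl ∩ U) ∪ (Vr ∩ U) := by
    intro x ⟨_, hxU⟩
    have hx : x ∈ Vl ∪ Vr := hcover ▸ Set.mem_univ x
    rcases hx with h | h
    · exact Or.inl ⟨h, hxU⟩
    · exact Or.inr ⟨h, hxU⟩
  calc (S ∩ U).ncard ≤ ((Vl ∩ U) ∪ (Vr ∩ U)).ncard :=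
        Set.ncard_le_ncard hsub (Set.toFinite _)
    _ ≤ (Vl ∩ U).ncard + (Vr ∩ U).ncard := Set.ncard_union_le _ _
    _ ≤ (Vl ∩ U).ncard + (Vl ∩ U).ncard := by omega
    _ = 2 * (Vl ∩ U).ncard := by ring
end

section
/- Let G=(V,E) be a finite simple graph of maximum degree Δ ≥ 1 without isolated vertices, and let U ⊆ V be an independent set. Then there exists a subset U' ⊆ U with Δ·|U'| ≥ |U| such that (G,U') is a yes-instance of Ext VC, i.e., G has a minimal vertex cover containing U'. In particular, there is a minimal vertex cover S of G with Δ·|S∩U| ≥ opt_MaxExtVC(G,U). -/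
/-!
Among all independent sets `J` of `G`, take one dominating the largest number of vertices of `U`;
let `C = N(J) ∩ U` and `R = U \ C`. Swapping a vertex `w ∉ U` into `J` (and dropping its
neighbours from `J`) gains `N(w) ∩ R` and loses only the vertices of `C` all of whose
`J`-neighbours are adjacent to `w`, so by maximality the gain is at most the loss. Summing over
all `w ∉ U`, which cover `R` because `U` is independent without isolated vertices, and counting
each `c ∈ C` through one `J`-neighbour `j` (a `w` losing `c` is one of the at most `Δ - 1`
neighbours of `j` other than `c`) gives `|R| ≤ (Δ - 1)|C|`, that is `|U| ≤ Δ|C|`. Extending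
`J` to a maximal independent set `I`, the complement of `I` is a minimal vertex cover
containing `C`.
-/

section

variable {V : Type*}

lemma IsIndepSet.exists_isMaximalIndepSet_superset [Finite V] {G : SimpleGraph V} {J : Set V}
    (hJ : IsIndepSet G J) : ∃ I, J ⊆ I ∧ IsMaximalIndepSet G I := by
  obtain ⟨I, hJI, hI, hmax⟩ := Finite.exists_le_maximal (p := IsIndepSet G) hJ
  exact ⟨I, hJI, hI, fun T hIT hT => hIT.not_subset (hmax hT hIT.subset)⟩

lemma IsMaximalIndepSet.exists_adj_of_notMem {G : SimpleGraph V} {I : Set V}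
    (hI : IsMaximalIndepSet G I) {v : V} (hv : v ∉ I) : ∃ j ∈ I, G.Adj j v := by
  by_contra! h
  refine hI.2 (insert v I) (Set.ssubset_insert hv) ?_
  rintro a b (rfl | ha) (rfl | hb) hab
  · exact G.irrefl hab
  · exact h b hb hab.symm
  · exact h a ha hab
  · exact hI.1 ha hb hab

lemma IsMaximalIndepSet.isMinimalVertexCover_compl {G : SimpleGraph V} {I : Set V}
    (hI : IsMaximalIndepSet G I) : IsMinimalVertexCover G Iᶜ := by
  refine ⟨fun u v huv => ?_, fun T hT hTcov => ?_⟩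
  · by_contra! h
    simp only [Set.mem_compl_iff, not_not] at h
    exact hI.1 h.1 h.2 huv
  · obtain ⟨v, hvI, hvT⟩ := Set.exists_of_ssubset hT
    obtain ⟨j, hjI, hjv⟩ := hI.exists_adj_of_notMem hvI
    exact (hTcov hjv).elim (fun hjT => hT.subset hjT hjI) hvT

lemma IsIndepSet.extVC_of_forall_exists_adj [Finite V] {G : SimpleGraph V} {J U : Set V}
    (hJ : IsIndepSet G J) (hU : ∀ u ∈ U, ∃ j ∈ J, G.Adj j u) : ExtVC G U := by
  obtain ⟨I, hJI, hI⟩ := hJ.exists_isMaximalIndepSet_superset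
  refine ⟨Iᶜ, fun u hu huI => ?_, hI.isMinimalVertexCover_compl⟩
  obtain ⟨j, hj, hju⟩ := hU u hu
  exact hI.1 (hJI hj) huI hju

lemma optMaxExtVC_le_of_extVC [Finite V] {G : SimpleGraph V} {U U' : Set V} {Δ : ℕ}
    (hU'U : U' ⊆ U) (hcard : U.ncard ≤ Δ * U'.ncard) (hext : ExtVC G U') :
    ∃ S, IsMinimalVertexCover G S ∧ optMaxExtVC G U ≤ Δ * (S ∩ U).ncard := by
  obtain ⟨S, hU'S, hS⟩ := hext
  refine ⟨S, hS, csSup_le ⟨_, S, hS, rfl⟩ ?_⟩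
  rintro n ⟨T, -, rfl⟩
  calc (T ∩ U).ncard ≤ U.ncard := Set.ncard_le_ncard Set.inter_subset_right
    _ ≤ Δ * U'.ncard := hcard
    _ ≤ Δ * (S ∩ U).ncard :=
      Nat.mul_le_mul_left Δ (Set.ncard_le_ncard (Set.subset_inter hU'S hU'U))

section NeighborsIn

open Finset

variable [DecidableEq V] (G : SimpleGraph V) [DecidableRel G.Adj]

def neighborsIn (J U : Finset V) : Finset V := {u ∈ U | ∃ j ∈ J, G.Adj j u}

variable {G}

lemma isIndepSet_insert_filter_not_adj {J : Finset V} (hJ : IsIndepSet G ↑J) (w : V) :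
    IsIndepSet G ↑(insert w {j ∈ J | ¬ G.Adj w j}) := by
  intro a b ha hb hab
  simp only [coe_insert, coe_filter, Set.mem_insert_iff, Set.mem_ofPred_eq] at ha hb
  rcases ha with rfl | ⟨ha, hwa⟩ <;> rcases hb with rfl | ⟨hb, hwb⟩
  · exact G.irrefl hab
  · exact hwb hab
  · exact hwa hab.symm
  · exact hJ ha hb hab

lemma card_filter_adj_sdiff_neighborsIn_le {J U : Finset V} (hJ : IsIndepSet G ↑J)
    (hJmax : ∀ K : Finset V, IsIndepSet G ↑K → #(neighborsIn G K U) ≤ #(neighborsIn G J U))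
    (w : V) :
    #{u ∈ U \ neighborsIn G J U | G.Adj w u} ≤
      #{c ∈ neighborsIn G J U | ∀ j ∈ J, G.Adj j c → G.Adj w j} := by
  set C := neighborsIn G J U with hC
  set L := {c ∈ C | ∀ j ∈ J, G.Adj j c → G.Adj w j} with hL
  set K := insert w {j ∈ J | ¬ G.Adj w j} with hK
  have hsub : (C \ L) ∪ {u ∈ U \ C | G.Adj w u} ⊆ neighborsIn G K U := by
    intro u hu
    simp only [hC, hL, hK, neighborsIn, mem_union, mem_sdiff, mem_filter, mem_insert] at hu ⊢
    rcases hu with ⟨hc, hcL⟩ | ⟨⟨huU, -⟩, hwu⟩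
    · obtain ⟨j, hj, hju, hwj⟩ : ∃ j ∈ J, G.Adj j u ∧ ¬ G.Adj w j := by
        simpa [hc] using hcL
      exact ⟨hc.1, j, Or.inr ⟨hj, hwj⟩, hju⟩
    · exact ⟨huU, w, Or.inl rfl, hwu⟩
  have hdisj : Disjoint (C \ L) {u ∈ U \ C | G.Adj w u} :=
    disjoint_left.2 fun u hu hu' => (mem_sdiff.1 (mem_filter.1 hu').1).2 (mem_sdiff.1 hu).1
  have hLC : L ⊆ C := filter_subset _ _
  have hgain := card_le_card hsub
  rw [card_union_of_disjoint hdisj, card_sdiff_of_subset hLC] at hgain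
  have hKcard := hJmax K (isIndepSet_insert_filter_not_adj hJ w)
  have hLCcard := card_le_card hLC
  omega

variable [Fintype V]

lemma card_filter_forall_adj_add_one_le {J U : Finset V} {Δ : ℕ} (hdeg : ∀ v, G.degree v ≤ Δ)
    {c : V} (hc : c ∈ neighborsIn G J U) :
    #{w ∈ univ \ U | ∀ j ∈ J, G.Adj j c → G.Adj w j} + 1 ≤ Δ := by
  obtain ⟨hcU, j, hj, hjc⟩ := mem_filter.1 hc
  have hsub :
      {w ∈ univ \ U | ∀ j ∈ J, G.Adj j c → G.Adj w j} ⊆ (G.neighborFinset j).erase c := by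
    intro w hw
    obtain ⟨hwU, hwc⟩ := mem_filter.1 hw
    refine mem_erase.2 ⟨?_, (G.mem_neighborFinset _ _).2 (hwc j hj hjc).symm⟩
    rintro rfl
    exact (mem_sdiff.1 hwU).2 hcU
  calc _ ≤ #((G.neighborFinset j).erase c) + 1 := by gcongr
    _ = G.degree j := card_erase_add_one ((G.mem_neighborFinset _ _).2 hjc)
    _ ≤ Δ := hdeg j

theorem card_le_mul_card_neighborsIn {J U : Finset V} {Δ : ℕ} (hdeg : ∀ v, G.degree v ≤ Δ)
    (hU : IsIndepSet G ↑U) (hUadj : ∀ u ∈ U, ∃ w, G.Adj u w) (hJ : IsIndepSet G ↑J)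
    (hJmax : ∀ K : Finset V, IsIndepSet G ↑K → #(neighborsIn G K U) ≤ #(neighborsIn G J U)) :
    #U ≤ Δ * #(neighborsIn G J U) := by
  set C := neighborsIn G J U
  set R := U \ C
  have hR : R ⊆ (univ \ U).biUnion fun w => {u ∈ R | G.Adj w u} := by
    intro u hu
    have huU := (mem_sdiff.1 hu).1
    obtain ⟨w, huw⟩ := hUadj u huU
    have hwU : w ∉ U := fun hwU => hU huU hwU huw
    simp only [mem_biUnion, mem_sdiff, mem_univ, true_and, mem_filter]
    exact ⟨w, hwU, hu, huw.symm⟩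
  calc #U = #R + #C := (card_sdiff_add_card_eq_card (filter_subset _ _)).symm
    _ ≤ ∑ w ∈ univ \ U, #(C.bipartiteAbove (fun w c => ∀ j ∈ J, G.Adj j c → G.Adj w j) w)
          + #C := by
      gcongr
      -- `congr` reconciles the two decidability instances of the filter predicate
      exact (card_le_card hR).trans <| card_biUnion_le.trans <| sum_le_sum fun w _ =>
        (card_filter_adj_sdiff_neighborsIn_le hJ hJmax w).trans_eq (by congr)
    _ = ∑ c ∈ C,
          (#((univ \ U).bipartiteBelow (fun w c => ∀ j ∈ J, G.Adj j c → G.Adj w j) c) + 1) := by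
      rw [sum_card_bipartiteAbove_eq_sum_card_bipartiteBelow, sum_add_distrib, card_eq_sum_ones C]
    _ ≤ ∑ _c ∈ C, Δ := sum_le_sum fun c hc => card_filter_forall_adj_add_one_le hdeg hc
    _ = Δ * #C := by rw [sum_const, smul_eq_mul, mul_comm]

theorem exists_isIndepSet_card_le_mul_card_neighborsIn {U : Finset V} {Δ : ℕ}
    (hdeg : ∀ v, G.degree v ≤ Δ) (hU : IsIndepSet G ↑U) (hUadj : ∀ u ∈ U, ∃ w, G.Adj u w) :
    ∃ J : Finset V, IsIndepSet G ↑J ∧ #U ≤ Δ * #(neighborsIn G J U) := by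
  obtain ⟨J, hJ, hJmax⟩ := Set.exists_max_image {K : Finset V | IsIndepSet G ↑K}
    (fun K => #(neighborsIn G K U)) (Set.toFinite _)
    ⟨∅, fun _ _ h => absurd h (notMem_empty _)⟩
  exact ⟨J, hJ, card_le_mul_card_neighborsIn hdeg hU hUadj hJ hJmax⟩

end NeighborsIn

end

theorem statement_13_general {V : Type*} [Fintype V] (G : SimpleGraph V) (U : Set V) (Δ : ℕ)
    (hdeg : ∀ v : V, (G.neighborSet v).ncard ≤ Δ)
    (hnoiso : ∀ v : V, ∃ w : V, G.Adj v w)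
    (hU : IsIndepSet G U) :
    (∃ U' ⊆ U, U.ncard ≤ Δ * U'.ncard ∧ ExtVC G U') ∧
      ∃ S : Set V, IsMinimalVertexCover G S ∧ optMaxExtVC G U ≤ Δ * (S ∩ U).ncard := by
  classical
  have hdegree (v : V) : G.degree v ≤ Δ := by
    rw [← G.card_neighborFinset_eq_degree, ← Set.ncard_coe_finset, G.coe_neighborFinset]
    exact hdeg v
  obtain ⟨J, hJ, hcard⟩ := exists_isIndepSet_card_le_mul_card_neighborsIn (U := U.toFinset)
    hdegree (by simpa using hU) fun u _ => hnoiso u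
  set U' : Set V := ↑(neighborsIn G J U.toFinset)
  have hU'U : U' ⊆ U := fun u hu => Set.mem_toFinset.1 (Finset.mem_filter.1 hu).1
  have hU'card : U.ncard ≤ Δ * U'.ncard := by
    rwa [Set.ncard_coe_finset, Set.ncard_eq_toFinset_card']
  have hext : ExtVC G U' := hJ.extVC_of_forall_exists_adj fun u hu => (Finset.mem_filter.1 hu).2
  exact ⟨⟨U', hU'U, hU'card, hext⟩, optMaxExtVC_le_of_extVC hU'U hU'card hext⟩

/-- If `G` has maximum degree `Δ ≥ 1`, no isolated vertices, and `U` is an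
independent set, then there is `U' ⊆ U` with `Δ·|U'| ≥ |U|` such that `(G, U')` is a
yes-instance of Ext VC; in particular, there is a minimal vertex cover `S` of `G` with
`Δ·|S ∩ U| ≥ opt_MaxExtVC(G, U)`. -/
theorem statement_13 {V : Type*} [Fintype V] (G : SimpleGraph V) (U : Set V) (Δ : ℕ)
    (hΔ : 1 ≤ Δ) (hdeg : ∀ v : V, (G.neighborSet v).ncard ≤ Δ)
    (hnoiso : ∀ v : V, ∃ w : V, G.Adj v w)
    (hU : IsIndepSet G U) :
    (∃ U' ⊆ U, U.ncard ≤ Δ * U'.ncard ∧ ExtVC G U') ∧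
      ∃ S : Set V, IsMinimalVertexCover G S ∧ optMaxExtVC G U ≤ Δ * (S ∩ U).ncard :=
  statement_13_general G U Δ hdeg hnoiso hU
end

section
/- Let H be a fixed finite simple graph and let G=(V,E) be a finite simple graph with U ⊆ V. There exists a minimal H-cover S of G with U ⊆ S if and only if: (i) for every u ∈ U there is a copy H_u of H in G whose vertex set satisfies V(H_u) ∩ U = {u}, and (ii) these copies can be chosen so that, with V' = ∪_{u∈U} V(H_u), the subgraph of G induced by V'\U is H-free. -/
/-- There is a copy of `H` inside the subgraph of `G` induced by `X`, i.e., an injective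
graph homomorphism from `H` into `G` whose range is contained in `X`. -/
def HasCopyIn {W V : Type*} (H : SimpleGraph W) (G : SimpleGraph V) (X : Set V) : Prop :=
  ∃ f : H →g G, Function.Injective f ∧ Set.range f ⊆ X

/-- `S` is an `H`-cover of `G`: every copy of `H` in `G` (injective homomorphism from `H`
to `G`) contains a vertex of `S`. -/
def IsHCover {W V : Type*} (H : SimpleGraph W) (G : SimpleGraph V) (S : Set V) : Prop :=
  ∀ f : H →g G, Function.Injective f → ∃ a : W, f a ∈ S

/-- `S` is a minimal `H`-cover of `G`: no proper subset of `S` is an `H`-cover. -/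
def IsMinimalHCover {W V : Type*} (H : SimpleGraph W) (G : SimpleGraph V) (S : Set V) : Prop :=
  IsHCover H G S ∧ ∀ T : Set V, T ⊂ S → ¬ IsHCover H G T

/-- `G` has a minimal `H`-cover `S` with `U ⊆ S` iff one can choose, for every
`u ∈ U`, a copy `H_u` of `H` in `G` (an injective homomorphism `h u`) with
`V(H_u) ∩ U = {u}`, such that, with `V' = ⋃_{u ∈ U} V(H_u)`, the subgraph of `G` induced by
`V' \ U` is `H`-free. -/
theorem statement_17 {W V : Type*} [Fintype W] [Fintype V]
    (H : SimpleGraph W) (G : SimpleGraph V) (U : Set V) :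
    (∃ S : Set V, U ⊆ S ∧ IsMinimalHCover H G S) ↔
      ∃ h : ↥U → (H →g G),
        (∀ u : ↥U, Function.Injective (h u)) ∧
        (∀ u : ↥U, Set.range (h u) ∩ U = {(u : V)}) ∧
        ¬ HasCopyIn H G ((⋃ u : ↥U, Set.range (h u)) \ U) := by
  classical
  constructor
  · rintro ⟨S, hUS, hcov, hmin⟩
    have key : ∀ u : ↥U, ∃ f : H →g G, Function.Injective f ∧
        (∀ a, f a ∉ S \ {(u : V)}) := by
      intro u
      have hsub : S \ {(u : V)} ⊂ S := by
        constructor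
        · exact Set.diff_subset
        · intro hcontra
          have := hcontra (hUS u.2)
          simp at this
      have hnc := hmin _ hsub
      unfold IsHCover at hnc
      push_neg at hnc
      obtain ⟨f, hf, hno⟩ := hnc
      exact ⟨f, hf, hno⟩
    choose h hinj hno using key
    have hhit : ∀ u : ↥U, ∀ x, x ∈ Set.range (h u) → x ∈ S → x = (u : V) := by
      rintro u x ⟨a, ha⟩ hxS
      have := hno u a
      rw [ha] at this
      by_contra hne
      exact this ⟨hxS, hne⟩
    have hmem : ∀ u : ↥U, (u : V) ∈ Set.range (h u) := by
      intro u
      obtain ⟨a, ha⟩ := hcov (h u) (hinj u)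
      have := hhit u (h u a) ⟨a, rfl⟩ ha
      rw [← this]; exact ⟨a, rfl⟩
    refine ⟨h, hinj, ?_, ?_⟩
    · intro u
      apply Set.eq_singleton_iff_unique_mem.mpr
      refine ⟨⟨hmem u, u.2⟩, ?_⟩
      rintro x ⟨hx1, hx2⟩
      exact hhit u x hx1 (hUS hx2)
    · rintro ⟨f, hf, hrange⟩
      obtain ⟨a, haS⟩ := hcov f hf
      obtain ⟨hin, hout⟩ := hrange (Set.mem_range_self a)
      obtain ⟨t, ht⟩ := Set.mem_iUnion.mp hin
      have : f a = (t : V) := hhit t (f a) ht haS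
      exact hout (this ▸ t.2)
  · rintro ⟨h, hinj, hU, hfree⟩
    set V' : Set V := ⋃ u : ↥U, Set.range (h u) with hV'
    set S₀ : Set V := (V' \ U)ᶜ with hS₀
    have hcov₀ : IsHCover H G S₀ := by
      intro f hf
      by_contra hc
      push_neg at hc
      refine hfree ⟨f, hf, ?_⟩
      rintro x ⟨a, rfl⟩
      have := hc a
      rwa [hS₀, Set.notMem_compl_iff] at this
    have hkey : ∀ T : Set V, T ⊆ S₀ → IsHCover H G T → U ⊆ T := by
      intro T hTS hTcov x hx
      obtain ⟨a, ha⟩ := hTcov (h ⟨x, hx⟩) (hinj ⟨x, hx⟩)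
      have hxV' : h ⟨x, hx⟩ a ∈ V' := Set.mem_iUnion.mpr ⟨⟨x, hx⟩, a, rfl⟩
      have hnot : h ⟨x, hx⟩ a ∉ V' \ U := by
        have := hTS ha
        rwa [hS₀, Set.mem_compl_iff] at this
      have hUmem : h ⟨x, hx⟩ a ∈ U := by
        by_contra hcc
        exact hnot ⟨hxV', hcc⟩
      have heq : h ⟨x, hx⟩ a ∈ Set.range (h ⟨x, hx⟩) ∩ U := ⟨⟨a, rfl⟩, hUmem⟩
      rw [hU ⟨x, hx⟩, Set.mem_singleton_iff] at heq
      have heq2 : (h ⟨x, hx⟩) a = x := heq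
      rw [← heq2]; exact ha
    have hwf : WellFounded ((· < ·) : Set V → Set V → Prop) :=
      (Finite.to_wellFoundedLT).wf
    obtain ⟨S, ⟨hSsub, hScov⟩, hSmin⟩ := hwf.has_min
      {T : Set V | T ⊆ S₀ ∧ IsHCover H G T} ⟨S₀, le_refl _, hcov₀⟩
    refine ⟨S, hkey S hSsub hScov, hScov, ?_⟩
    intro T hT hTcov
    exact hSmin T ⟨hT.subset.trans hSsub, hTcov⟩ hT
end
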